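/- arXiv:math/0612836 — 7 statements merged into one kernel-verified Lean document; each statement's English description precedes it below -/
import Mathlib

section
/- Let Δ ⊆ ℝ be an interval. If ∑_{N≥1} 1/(2^N λ_N(Δ)) < ∞, then for every ε > 0, almost surely there exists N₀ such that for all N ≥ N₀ one has (1−ε) λ_N(Δ) ≤ μ_N(ω)(Δ) ≤ (1+ε) λ_N(Δ). -/
open MeasureTheory ProbabilityTheory Filter
open scoped ENNReal NNReal

/-- The empirical measure of a finite family of points in a measurable space. -/
noncomputable def empMeasure {α E : Type*} [Fintype α] [MeasurableSpace E]
    (x : α → E) : Measure E :=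
  (Fintype.card α : ℝ≥0∞)⁻¹ • ∑ a : α, Measure.dirac (x a)

lemma empMeasure_apply {α E : Type*} [Fintype α] [MeasurableSpace E]
    (x : α → E) (hcard : 0 < Fintype.card α) {s : Set E} (hs : MeasurableSet s) :
    empMeasure x s =
      ENNReal.ofReal ((Fintype.card α : ℝ)⁻¹ *
        ∑ a : α, s.indicator (fun _ => (1 : ℝ)) (x a)) := by
  rw [empMeasure, Measure.smul_apply, Measure.coe_finset_sum, Finset.sum_apply]
  have h1 : ∀ a : α, Measure.dirac (x a) s
      = ENNReal.ofReal (s.indicator (fun _ => (1 : ℝ)) (x a)) := by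
    intro a
    rw [Measure.dirac_apply' _ hs]
    by_cases h : x a ∈ s <;> simp [h]
  simp_rw [h1]
  rw [← ENNReal.ofReal_sum_of_nonneg (fun a _ => by
    dsimp [Set.indicator]; split <;> norm_num)]
  rw [ENNReal.ofReal_mul (by positivity),
    ENNReal.ofReal_inv_of_pos (by exact_mod_cast hcard), ENNReal.ofReal_natCast,
    smul_eq_mul]

/-- **REM, Step 2.** If `∑_N 1/(2^N λ_N(Δ)) < ∞` then for every `ε > 0`, almost surely,
eventually in `N`, `(1-ε) λ_N(Δ) ≤ μ_N(Δ) ≤ (1+ε) λ_N(Δ)`. -/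
theorem rem_step2
    {Ω : Type*} [MeasurableSpace Ω] (P : Measure Ω) [IsProbabilityMeasure P]
    (lam : ℕ → Measure ℝ) (hlam : ∀ N, IsProbabilityMeasure (lam N))
    (ξ : (N : ℕ) → Fin (2 ^ N) → Ω → ℝ)
    (hmeas : ∀ N i, Measurable (ξ N i))
    (hindep : ∀ N, iIndepFun (ξ N) P)
    (hdist : ∀ N i, P.map (ξ N i) = lam N)
    (Δ : Set ℝ) (hΔ : Δ.OrdConnected) (hΔm : MeasurableSet Δ)
    (hpos : ∀ N, 0 < lam N Δ)
    (hsum : Summable fun N : ℕ => ((2 : ℝ) ^ N * (lam N Δ).toReal)⁻¹)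
    (ε : ℝ) (hε : 0 < ε) :
    ∀ᵐ ω ∂P, ∀ᶠ N in atTop,
      ENNReal.ofReal (1 - ε) * lam N Δ ≤ empMeasure (fun i => ξ N i ω) Δ ∧
      empMeasure (fun i => ξ N i ω) Δ ≤ ENNReal.ofReal (1 + ε) * lam N Δ := by
  classical
  set p : ℕ → ℝ := fun N => (lam N Δ).toReal with hp
  have hp_pos : ∀ N, 0 < p N := fun N =>
    ENNReal.toReal_pos (hpos N).ne' (measure_ne_top _ _)
  -- indicator random variables
  set φ : ℝ → ℝ := Δ.indicator (fun _ => (1 : ℝ)) with hφ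
  have hφm : Measurable φ := measurable_const.indicator hΔm
  set X : (N : ℕ) → Fin (2 ^ N) → Ω → ℝ := fun N i => φ ∘ ξ N i with hXdef
  have hXmeas : ∀ N i, Measurable (X N i) := fun N i => hφm.comp (hmeas N i)
  have hXbd : ∀ N i ω, ‖X N i ω‖ ≤ 1 := by
    intro N i ω
    simp only [hXdef, hφ, Function.comp_apply, Set.indicator]
    split <;> simp
  have hXmem : ∀ N i, MemLp (X N i) 2 P := fun N i =>
    MemLp.of_bound (hXmeas N i).aestronglyMeasurable 1
      (Filter.Eventually.of_forall fun ω => hXbd N i ω)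
  have hXint : ∀ N i, ∫ ω, X N i ω ∂P = p N := by
    intro N i
    show ∫ ω, φ (ξ N i ω) ∂P = p N
    rw [← integral_map (hmeas N i).aemeasurable hφm.aestronglyMeasurable, hdist, hφ]
    rw [integral_indicator_const (1 : ℝ) hΔm, smul_eq_mul, mul_one]
    rfl
  have hXsq : ∀ N i, (X N i) ^ 2 = X N i := by
    intro N i
    funext ω
    simp only [Pi.pow_apply, hXdef, hφ, Function.comp_apply, Set.indicator]
    split <;> norm_num
  have hXvar : ∀ N i, variance (X N i) P = p N - p N ^ 2 := by
    intro N i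
    rw [variance_eq_sub (hXmem N i), hXsq N i, hXint N i]
  -- the sum process
  set S : (N : ℕ) → Ω → ℝ := fun N => ∑ i : Fin (2 ^ N), X N i with hSdef
  have hSmem : ∀ N, MemLp (S N) 2 P := fun N =>
    memLp_finset_sum' _ fun i _ => hXmem N i
  have hES : ∀ N, ∫ ω, S N ω ∂P = 2 ^ N * p N := by
    intro N
    have : ∫ ω, S N ω ∂P = ∑ i : Fin (2 ^ N), ∫ ω, X N i ω ∂P := by
      simp only [hSdef, Finset.sum_apply]
      exact integral_finset_sum _ fun i _ => (hXmem N i).integrable one_le_two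
    rw [this]
    simp [hXint N, Finset.card_univ]
  have hVarS : ∀ N, variance (S N) P = 2 ^ N * (p N - p N ^ 2) := by
    intro N
    rw [hSdef, IndepFun.variance_sum (fun i _ => hXmem N i)
      (fun i _ j _ hij => ((hindep N).indepFun hij).comp hφm hφm)]
    simp [hXvar N, Finset.card_univ]
    ring
  -- the bad sets
  set A : ℕ → Set Ω := fun N => {ω | ε * (2 ^ N * p N) ≤ |S N ω - 2 ^ N * p N|} with hA
  have hPA : ∀ N, P (A N) ≤ ENNReal.ofReal (ε⁻¹ ^ 2 * ((2 : ℝ) ^ N * p N)⁻¹) := by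
    intro N
    have hc : 0 < ε * (2 ^ N * p N) := by
      have := hp_pos N; positivity
    have := meas_ge_le_variance_div_sq (μ := P) (hSmem N) hc
    rw [hES N] at this
    refine le_trans this (ENNReal.ofReal_le_ofReal ?_)
    rw [hVarS N]
    rw [div_le_iff₀ (by positivity)]
    have h1 : p N - p N ^ 2 ≤ p N := by nlinarith [sq_nonneg (p N)]
    have h2N : (0:ℝ) < 2 ^ N := by positivity
    have hpN := hp_pos N
    have key : (2:ℝ) ^ N * (p N - p N ^ 2) ≤ 2 ^ N * p N := by nlinarith
    refine key.trans ?_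
    have : ε⁻¹ ^ 2 * ((2:ℝ) ^ N * p N)⁻¹ * (ε * (2 ^ N * p N)) ^ 2
        = 2 ^ N * p N := by
      field_simp
    rw [this]
  have htsum : (∑' N, P (A N)) ≠ ∞ := by
    have hb : (∑' N, P (A N)) ≤
        ∑' N, ENNReal.ofReal (ε⁻¹ ^ 2 * ((2 : ℝ) ^ N * p N)⁻¹) :=
      ENNReal.tsum_le_tsum hPA
    have hsum2 : Summable fun N => ε⁻¹ ^ 2 * ((2 : ℝ) ^ N * p N)⁻¹ :=
      hsum.mul_left _
    have : (∑' N, ENNReal.ofReal (ε⁻¹ ^ 2 * ((2 : ℝ) ^ N * p N)⁻¹))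
        = ENNReal.ofReal (∑' N, ε⁻¹ ^ 2 * ((2 : ℝ) ^ N * p N)⁻¹) :=
      (ENNReal.ofReal_tsum_of_nonneg (fun N => by
        have := hp_pos N; positivity) hsum2).symm
    exact ne_top_of_le_ne_top (by rw [this]; exact ENNReal.ofReal_ne_top) hb
  -- Borel–Cantelli
  filter_upwards [ae_eventually_notMem htsum] with ω hω
  filter_upwards [hω] with N hN
  have hlt : |S N ω - 2 ^ N * p N| < ε * (2 ^ N * p N) := not_le.mp hN
  rw [abs_lt] at hlt
  have h2N : (0:ℝ) < 2 ^ N := by positivity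
  have hpN := hp_pos N
  have hemp : empMeasure (fun i => ξ N i ω) Δ
      = ENNReal.ofReal (((2:ℝ) ^ N)⁻¹ * S N ω) := by
    rw [empMeasure_apply _ (by simp) hΔm]
    congr 2
    · simp [Fintype.card_fin]
    · simp [hSdef, hXdef, hφ]
  have hlamN : lam N Δ = ENNReal.ofReal (p N) :=
    (ENNReal.ofReal_toReal (measure_ne_top _ _)).symm
  constructor
  · rw [hemp, hlamN, ← ENNReal.ofReal_mul' hpN.le]
    apply ENNReal.ofReal_le_ofReal
    rw [le_inv_mul_iff₀ h2N]
    nlinarith [hlt.1]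
  · rw [hemp, hlamN, ← ENNReal.ofReal_mul' hpN.le]
    apply ENNReal.ofReal_le_ofReal
    rw [inv_mul_le_iff₀ h2N]
    nlinarith [hlt.2]
end

section
/- Let Δ ⊆ ℝ be an interval and suppose (1/N) log λ_N(Δ) converges to −L with L < log 2. Then almost surely lim_{N→∞} (1/N) log μ_N(ω)(Δ) = −L. -/
open MeasureTheory ProbabilityTheory Filter
open scoped ENNReal NNReal

lemma empMeasure_apply_eq {n : ℕ} (hn : 0 < n) {α : Type*} [Fintype α]
    (hcard : Fintype.card α = n) (x : α → ℝ) {s : Set ℝ} (hs : MeasurableSet s) :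
    empMeasure x s = ENNReal.ofReal ((∑ a, s.indicator (fun _ => (1:ℝ)) (x a)) / n) := by
  have h1 : empMeasure x s = (n : ℝ≥0∞)⁻¹ * ∑ a, Measure.dirac (x a) s := by
    simp [empMeasure, hcard, Measure.finset_sum_apply]
  have h2 : ∀ a : α, Measure.dirac (x a) s
      = ENNReal.ofReal (s.indicator (fun _ => (1:ℝ)) (x a)) := by
    intro a
    rw [Measure.dirac_apply' _ hs]
    by_cases h : x a ∈ s <;> simp [h]
  rw [h1]
  rw [Finset.sum_congr rfl (fun a _ => h2 a),
    ← ENNReal.ofReal_sum_of_nonneg (fun a _ => Set.indicator_nonneg (by simp) _)]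
  rw [ENNReal.ofReal_div_of_pos (by exact_mod_cast hn), ENNReal.ofReal_natCast,
    div_eq_mul_inv, mul_comm]


/-- **REM, Step 4.** If `(1/N) log λ_N(Δ) → -L` with `L < log 2`, then almost surely
`(1/N) log μ_N(Δ) → -L`. -/
theorem rem_step4
    {Ω : Type*} [MeasurableSpace Ω] (P : Measure Ω) [IsProbabilityMeasure P]
    (lam : ℕ → Measure ℝ) (hlam : ∀ N, IsProbabilityMeasure (lam N))
    (ξ : (N : ℕ) → Fin (2 ^ N) → Ω → ℝ)
    (hmeas : ∀ N i, Measurable (ξ N i))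
    (hindep : ∀ N, iIndepFun (ξ N) P)
    (hdist : ∀ N i, P.map (ξ N i) = lam N)
    (Δ : Set ℝ) (hΔ : Δ.OrdConnected) (hΔm : MeasurableSet Δ)
    (L : ℝ) (hL : L < Real.log 2)
    (hlim : Tendsto (fun N : ℕ => (((N : ℝ)⁻¹ : ℝ) : EReal) * ENNReal.log (lam N Δ))
      atTop (nhds ((-L : ℝ) : EReal))) :
    ∀ᵐ ω ∂P, Tendsto
      (fun N : ℕ => (((N : ℝ)⁻¹ : ℝ) : EReal) * ENNReal.log (empMeasure (fun i => ξ N i ω) Δ))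
      atTop (nhds ((-L : ℝ) : EReal)) := by
  classical
  set p : ℕ → ℝ := fun N => (lam N Δ).toReal with hp_def
  set X : (N : ℕ) → Fin (2^N) → Ω → ℝ :=
    fun N i ω => Δ.indicator (fun _ => (1:ℝ)) (ξ N i ω) with hX_def
  set S : (N : ℕ) → Ω → ℝ := fun N ω => ∑ i, X N i ω with hS_def
  set m : ℕ → ℝ := fun N => 2^N * p N with hm_def
  set B : ℕ → Set Ω := fun N => {ω | m N / 2 ≤ |S N ω - m N|} with hB_def
  -- Step 1: real-valued limit from hlim, and eventual positivity
  have hbot : ∀ᶠ N : ℕ in atTop, ((((N:ℝ)⁻¹ : ℝ) : EReal) * ENNReal.log (lam N Δ)) ≠ ⊥ :=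
    hlim.eventually_ne (EReal.coe_ne_bot _)
  have hpos : ∀ᶠ N : ℕ in atTop, lam N Δ ≠ 0 := by
    filter_upwards [hbot, eventually_ge_atTop 1] with N hN hN1
    intro h0
    apply hN
    rw [h0, ENNReal.log_zero]
    exact EReal.mul_bot_of_pos (by
      refine EReal.coe_pos.2 (inv_pos.2 ?_)
      exact_mod_cast hN1)
  have hppos : ∀ᶠ N : ℕ in atTop, 0 < p N := by
    filter_upwards [hpos] with N h0
    exact ENNReal.toReal_pos h0 (measure_ne_top _ _)
  have hco : ∀ᶠ N : ℕ in atTop, ((((N:ℝ)⁻¹ : ℝ) : EReal) * ENNReal.log (lam N Δ))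
      = (((N:ℝ)⁻¹ * Real.log (p N) : ℝ) : EReal) := by
    filter_upwards [hpos] with N h0
    rw [ENNReal.log_pos_real h0 (measure_ne_top _ _), ← EReal.coe_mul]
  have hp : Tendsto (fun N : ℕ => (N:ℝ)⁻¹ * Real.log (p N)) atTop (nhds (-L)) := by
    rw [← EReal.tendsto_coe]
    exact hlim.congr' hco
  -- Step 2: growth of m
  have hm : Tendsto (fun N : ℕ => (N:ℝ)⁻¹ * Real.log (m N)) atTop (nhds (Real.log 2 - L)) := by
    have h1 : Tendsto (fun N : ℕ => Real.log 2 + (N:ℝ)⁻¹ * Real.log (p N)) atTop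
        (nhds (Real.log 2 + -L)) := tendsto_const_nhds.add hp
    rw [show Real.log 2 - L = Real.log 2 + -L by ring]
    refine h1.congr' ?_
    filter_upwards [hppos, eventually_ge_atTop 1] with N hpN hN1
    have hN0 : (N:ℝ) ≠ 0 := by positivity
    rw [hm_def]
    simp only
    rw [Real.log_mul (by positivity) (ne_of_gt hpN), Real.log_pow, mul_add]
    rw [show (N:ℝ)⁻¹ * ((N:ℕ) * Real.log 2) = Real.log 2 by field_simp]
  set ε : ℝ := (Real.log 2 - L) / 2 with hε_def
  have hε : 0 < ε := by simp only [hε_def]; linarith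
  set r : ℝ := Real.exp (-ε) with hr_def
  have hr0 : 0 < r := Real.exp_pos _
  have hr1 : r < 1 := Real.exp_lt_one_iff.2 (by linarith)
  have hmlarge : ∀ᶠ N : ℕ in atTop, 4 / m N ≤ 4 * r ^ N := by
    filter_upwards [hm.eventually (eventually_gt_nhds (show ε < Real.log 2 - L by
      simp only [hε_def]; linarith)), hppos, eventually_ge_atTop 1] with N h1 h2 h3
    have hmpos : 0 < m N := by simp only [hm_def]; positivity
    have hN0 : (0:ℝ) < (N:ℝ) := by exact_mod_cast h3
    have hlog : (N:ℝ) * ε < Real.log (m N) := by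
      have h5 := mul_lt_mul_of_pos_left h1 hN0
      rwa [← mul_assoc, mul_inv_cancel₀ hN0.ne', one_mul] at h5
    have hexp : Real.exp ((N:ℝ) * ε) ≤ m N := by
      have := Real.exp_le_exp.2 hlog.le
      rwa [Real.exp_log hmpos] at this
    have h4 : 4 * r ^ N = 4 / Real.exp ((N:ℝ) * ε) := by
      rw [hr_def, ← Real.exp_nat_mul, eq_div_iff (by positivity), mul_assoc,
        ← Real.exp_add]
      norm_num
    rw [h4]
    exact div_le_div_of_nonneg_left (by norm_num) (by positivity) hexp
  -- Step 3: per-N probabilistic facts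
  have hXmeas : ∀ N i, Measurable (X N i) :=
    fun N i => (measurable_const.indicator hΔm).comp (hmeas N i)
  have hX2 : ∀ N i, MemLp (X N i) 2 P := by
    intro N i
    refine MemLp.of_bound ((hXmeas N i).aestronglyMeasurable) 1 ?_
    filter_upwards with ω
    by_cases h : ξ N i ω ∈ Δ <;> simp [hX_def, h]
  have hXint : ∀ N i, ∫ ω, X N i ω ∂P = p N := by
    intro N i
    have : ∫ ω, X N i ω ∂P = ∫ x, Δ.indicator (fun _ => (1:ℝ)) x ∂(P.map (ξ N i)) := by
      rw [integral_map (hmeas N i).aemeasurable]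
      exact (measurable_const.indicator hΔm).aestronglyMeasurable
    rw [this, hdist, integral_indicator_const _ hΔm, smul_eq_mul, mul_one]
    exact measureReal_def _ _
  have hXsq : ∀ N i, (X N i) ^ 2 = X N i := by
    intro N i
    funext ω
    by_cases h : ξ N i ω ∈ Δ <;> simp [hX_def, h]
  have hXvar : ∀ N i, variance (X N i) P ≤ p N := by
    intro N i
    rw [variance_eq_sub (hX2 N i), hXsq N i]
    have h1 : ∫ ω, X N i ω ∂P = p N := hXint N i
    simp only [h1]
    nlinarith [sq_nonneg (p N)]
  have hSfun : ∀ N, S N = ∑ i, X N i := by intro N; funext ω; simp [hS_def]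
  have hSmean : ∀ N, ∫ ω, S N ω ∂P = m N := by
    intro N
    rw [hS_def]
    simp only
    rw [integral_finset_sum _ (fun i _ => (hX2 N i).integrable one_le_two)]
    simp [hXint, hm_def]
  have hXindep : ∀ N, iIndepFun (X N) P := by
    intro N
    exact (hindep N).comp (fun _ => Δ.indicator (fun _ => (1:ℝ)))
      (fun _ => measurable_const.indicator hΔm)
  have hSvar : ∀ N, variance (S N) P ≤ m N := by
    intro N
    rw [hSfun, IndepFun.variance_sum (fun i _ => hX2 N i)
      (fun i _ j _ hij => (hXindep N).indepFun hij)]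
    calc ∑ i : Fin (2^N), variance (X N i) P ≤ ∑ _i : Fin (2^N), p N :=
          Finset.sum_le_sum (fun i _ => hXvar N i)
      _ = m N := by simp [hm_def]
  have hS2 : ∀ N, MemLp (S N) 2 P := by
    intro N
    rw [hSfun]; exact memLp_finset_sum' _ (fun i _ => hX2 N i)
  have hcheb : ∀ N, 0 < p N → P (B N) ≤ ENNReal.ofReal (4 / m N) := by
    intro N hpN
    have hmpos : 0 < m N := by simp only [hm_def]; positivity
    have h := meas_ge_le_variance_div_sq (μ := P) (hS2 N) (c := m N / 2) (by linarith)
    rw [hSmean N] at h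
    refine le_trans (le_of_eq ?_) (h.trans (ENNReal.ofReal_le_ofReal ?_))
    · rfl
    · rw [div_le_div_iff₀ (by positivity) hmpos]
      nlinarith [hSvar N]
  -- Step 4: Borel-Cantelli
  have hBbound : ∀ᶠ N : ℕ in atTop, P (B N) ≤ ENNReal.ofReal (4 * r ^ N) := by
    filter_upwards [hppos, hmlarge] with N h1 h2
    exact (hcheb N h1).trans (ENNReal.ofReal_le_ofReal h2)
  obtain ⟨N₀, hN₀⟩ := eventually_atTop.1 hBbound
  have hgeom : Summable (fun k : ℕ => 4 * r ^ (k + N₀)) := by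
    have := (summable_geometric_of_lt_one hr0.le hr1).mul_left (4 * r ^ N₀)
    refine this.congr (fun k => ?_)
    rw [pow_add]; ring
  have hsum : (∑' k : ℕ, P (B (k + N₀))) ≠ ⊤ := by
    refine ne_top_of_le_ne_top ?_ (ENNReal.tsum_le_tsum
      (fun k => hN₀ (k + N₀) (Nat.le_add_left _ _)))
    rw [← ENNReal.ofReal_tsum_of_nonneg (fun k => by positivity) hgeom]
    exact ENNReal.ofReal_ne_top
  have hBC : ∀ᵐ ω ∂P, ∀ᶠ N : ℕ in atTop, ω ∉ B N := by
    filter_upwards [ae_eventually_notMem hsum] with ω hω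
    obtain ⟨a, ha⟩ := eventually_atTop.1 hω
    refine eventually_atTop.2 ⟨a + N₀, fun N hN => ?_⟩
    have hNN : N - N₀ + N₀ = N := Nat.sub_add_cancel (by omega)
    rw [← hNN]
    exact ha _ (by omega)
  -- Step 5: conclusion
  filter_upwards [hBC] with ω hω
  have hSbound : ∀ᶠ N : ℕ in atTop, m N / 2 < S N ω ∧ S N ω < 3 * m N / 2 := by
    filter_upwards [hω, hppos] with N h1 h2
    have habs : |S N ω - m N| < m N / 2 := lt_of_not_ge h1
    rw [abs_lt] at habs
    constructor <;> linarith [habs.1, habs.2]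
  have hsecond : Tendsto (fun N : ℕ => (N:ℝ)⁻¹ * Real.log (S N ω / m N)) atTop (nhds 0) := by
    apply squeeze_zero_norm' (a := fun N : ℕ => (N:ℝ)⁻¹ * Real.log 2)
    · filter_upwards [hSbound, hppos, eventually_ge_atTop 1] with N h1 h2 h3
      have hmpos : 0 < m N := by simp only [hm_def]; positivity
      have hx1 : 1/2 < S N ω / m N := by
        rw [lt_div_iff₀ hmpos]; linarith [h1.1]
      have hx2 : S N ω / m N < 2 := by
        rw [div_lt_iff₀ hmpos]; linarith [h1.2]
      have hxpos : 0 < S N ω / m N := by linarith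
      have hla : |Real.log (S N ω / m N)| ≤ Real.log 2 := by
        rw [abs_le]
        constructor
        · have := Real.log_le_log (by norm_num : (0:ℝ) < 1/2) hx1.le
          rw [Real.log_div (by norm_num) (by norm_num)] at this
          simpa using this
        · exact (Real.log_le_log hxpos hx2.le)
      rw [norm_mul, Real.norm_eq_abs, Real.norm_eq_abs, abs_inv, Nat.abs_cast]
      have hNpos : (0:ℝ) < (N:ℝ) := by exact_mod_cast h3
      exact mul_le_mul_of_nonneg_left hla (by positivity)
    · have h0 : Tendsto (fun N : ℕ => (N:ℝ)⁻¹) atTop (nhds 0) :=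
        tendsto_inv_atTop_zero.comp tendsto_natCast_atTop_atTop
      simpa using h0.mul_const (Real.log 2)
  have hmain : Tendsto (fun N : ℕ => (N:ℝ)⁻¹ * Real.log (S N ω / 2^N)) atTop (nhds (-L)) := by
    have h1 : Tendsto (fun N : ℕ => (N:ℝ)⁻¹ * Real.log (p N) +
        (N:ℝ)⁻¹ * Real.log (S N ω / m N)) atTop (nhds (-L + 0)) := hp.add hsecond
    rw [add_zero] at h1
    refine h1.congr' ?_
    filter_upwards [hppos, hSbound] with N h2 h3
    have hmpos : 0 < m N := by simp only [hm_def]; positivity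
    have hSpos : 0 < S N ω := by linarith [h3.1]
    rw [← mul_add, ← Real.log_mul (ne_of_gt h2) (by positivity)]
    congr 2
    rw [hm_def]
    field_simp
  have hfin : ∀ᶠ N : ℕ in atTop,
      (((N:ℝ)⁻¹ : ℝ) : EReal) * ENNReal.log (empMeasure (fun i => ξ N i ω) Δ)
      = (((N:ℝ)⁻¹ * Real.log (S N ω / 2^N) : ℝ) : EReal) := by
    filter_upwards [hppos, hSbound] with N h1 h2
    have hmpos : 0 < m N := by simp only [hm_def]; positivity
    have hSpos : 0 < S N ω := by linarith [h2.1]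
    have hcard : 0 < 2^N := Nat.pow_pos (by norm_num)
    rw [empMeasure_apply_eq hcard (Fintype.card_fin _) _ hΔm]
    have hsum_eq : (∑ a : Fin (2^N), Δ.indicator (fun _ => (1:ℝ)) (ξ N a ω)) = S N ω := rfl
    rw [hsum_eq]
    have hcast : ((2^N : ℕ) : ℝ) = (2:ℝ)^N := by push_cast; ring
    rw [hcast, ENNReal.log_ofReal_of_pos (by positivity), ← EReal.coe_mul]
  exact ((EReal.tendsto_coe.2 hmain).congr' (hfin.mono fun N h => h.symm))
end

section
/- (GREM, Step 1) Let Δ = Δ₁ × ⋯ × Δ_n be a box in ℝⁿ with interval sides. If for some 1 ≤ j ≤ n one has ∑_{N≥n} ∏_{i=1}^j 2^{k(i,N)} λ_N^i(Δ_i) < ∞, then almost surely there exists N₀ such that for all N ≥ N₀ one has μ_N(ω)(Δ) = 0. -/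
open MeasureTheory ProbabilityTheory Filter
open scoped ENNReal NNReal

/-- **GREM, Step 1.** If for some `j`, `∑_N ∏_{i ≤ j} 2^{k(i,N)} λ_N^i(Δ_i) < ∞`, then
almost surely, eventually in `N`, the empirical measure of the box `Δ₁ × ⋯ × Δ_n`
vanishes. -/
theorem grem_step1
    {Ω : Type*} [MeasurableSpace Ω] (P : Measure Ω) [IsProbabilityMeasure P]
    (n : ℕ) (hn : 1 ≤ n)
    (k : Fin n → ℕ → ℕ) (hk : ∀ N : ℕ, ∑ j : Fin n, k j N = N)
    (lam : Fin n → ℕ → Measure ℝ) (hlam : ∀ j N, IsProbabilityMeasure (lam j N))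
    (ξ : (N : ℕ) → (j : Fin n) → ((i : Fin n) → i ≤ j → (Fin (k i N) → Bool)) → Ω → ℝ)
    (hmeas : ∀ N j c, Measurable (ξ N j c))
    (hindep : ∀ N : ℕ, iIndepFun
      (fun q : Σ j : Fin n, ((i : Fin n) → i ≤ j → (Fin (k i N) → Bool)) =>
        ξ N q.1 q.2) P)
    (hdist : ∀ N j c, P.map (ξ N j c) = lam j N)
    (Δ : Fin n → Set ℝ) (hΔ : ∀ i, (Δ i).OrdConnected) (hΔm : ∀ i, MeasurableSet (Δ i))
    (hsum : ∃ j : Fin n, Summable fun N : ℕ =>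
      ∏ i ∈ Finset.Iic j, (2 : ℝ) ^ k i N * (lam i N (Δ i)).toReal) :
    ∀ᵐ ω ∂P, ∀ᶠ N in atTop,
      empMeasure
        (fun σ : (∀ i : Fin n, Fin (k i N) → Bool) =>
          fun j : Fin n => ξ N j (fun i _ => σ i) ω)
        (Set.univ.pi Δ) = 0 := by
  classical
  obtain ⟨j₀, hsum⟩ := hsum
  -- the bad event at stage `N`
  set p : ℕ → Ω → Prop := fun N ω =>
    ∃ τ : ∀ i : Fin n, i ≤ j₀ → Fin (k i N) → Bool,
      ∀ (i : Fin n) (h : i ≤ j₀), ξ N i (fun i' h' => τ i' (h'.trans h)) ω ∈ Δ i with hp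
  have hnonneg : ∀ N, 0 ≤ ∏ i ∈ Finset.Iic j₀, (2 : ℝ) ^ k i N * (lam i N (Δ i)).toReal := by
    intro N
    exact Finset.prod_nonneg fun i _ => mul_nonneg (by positivity) ENNReal.toReal_nonneg
  -- union bound + independence
  have key : ∀ N, P {ω | p N ω} ≤
      ENNReal.ofReal (∏ i ∈ Finset.Iic j₀, (2 : ℝ) ^ k i N * (lam i N (Δ i)).toReal) := by
    intro N
    set A : (∀ i : Fin n, i ≤ j₀ → Fin (k i N) → Bool) → Set Ω := fun τ =>
      ⋂ (i : Fin n) (h : i ≤ j₀), ξ N i (fun i' h' => τ i' (h'.trans h)) ⁻¹' Δ i with hA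
    have hsub : {ω | p N ω} ⊆ ⋃ τ, A τ := by
      rintro ω ⟨τ, hτ⟩
      exact Set.mem_iUnion.mpr ⟨τ, Set.mem_iInter.mpr fun i => Set.mem_iInter.mpr fun h => hτ i h⟩
    have hAP : ∀ τ, P (A τ) = ∏ i ∈ Finset.Iic j₀, lam i N (Δ i) := by
      intro τ
      set g : {i // i ∈ Finset.Iic j₀} →
          (Σ j : Fin n, ((i : Fin n) → i ≤ j → (Fin (k i N) → Bool))) := fun i =>
        ⟨i.1, fun i' h' => τ i' (h'.trans (Finset.mem_Iic.mp i.2))⟩ with hg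
      have hginj : Function.Injective g := by
        intro a b hab
        have : a.1 = b.1 := congrArg Sigma.fst hab
        exact Subtype.ext this
      set S := (Finset.Iic j₀).attach.image g with hS
      have hind := (hindep N).measure_inter_preimage_eq_mul (sets := fun q => Δ q.1) S
        (fun q _ => hΔm q.1)
      have hset : (⋂ q ∈ S, (fun ω => ξ N q.1 q.2 ω) ⁻¹' Δ q.1) = A τ := by
        ext ω
        simp only [Set.mem_iInter, hS, Finset.mem_image, Finset.mem_attach, true_and, hA,
          Set.mem_preimage]
        constructor
        · intro H i h
          exact H (g ⟨i, Finset.mem_Iic.mpr h⟩) ⟨⟨i, Finset.mem_Iic.mpr h⟩, rfl⟩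
        · rintro H q ⟨i, rfl⟩
          exact H i.1 (Finset.mem_Iic.mp i.2)
      have hmap : ∀ q : (Σ j : Fin n, ((i : Fin n) → i ≤ j → (Fin (k i N) → Bool))),
          P ((fun ω => ξ N q.1 q.2 ω) ⁻¹' Δ q.1) = lam q.1 N (Δ q.1) := by
        intro q
        rw [← Measure.map_apply (hmeas N q.1 q.2) (hΔm q.1), hdist]
      rw [hset] at hind
      rw [hind, hS, Finset.prod_image (fun a _ b _ hab => hginj hab)]
      calc ∏ x ∈ (Finset.Iic j₀).attach, P ((fun ω => ξ N (g x).1 (g x).2 ω) ⁻¹' Δ (g x).1)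
          = ∏ x ∈ (Finset.Iic j₀).attach, lam x.1 N (Δ x.1) :=
            Finset.prod_congr rfl (fun x _ => hmap (g x))
        _ = ∏ i ∈ Finset.Iic j₀, lam i N (Δ i) :=
            Finset.prod_attach (Finset.Iic j₀) (fun i => lam i N (Δ i))
    -- cardinality of the index set
    have hcard : Fintype.card (∀ i : Fin n, i ≤ j₀ → Fin (k i N) → Bool)
        = ∏ i ∈ Finset.Iic j₀, 2 ^ k i N := by
      rw [Fintype.card_pi]
      have : ∀ i : Fin n, Fintype.card (i ≤ j₀ → Fin (k i N) → Bool)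
          = if i ∈ Finset.Iic j₀ then 2 ^ k i N else 1 := by
        intro i
        by_cases h : i ≤ j₀
        · rw [if_pos (Finset.mem_Iic.mpr h),
            Fintype.card_congr (@Equiv.funUnique (i ≤ j₀) _ (uniqueProp h))]
          simp [Fintype.card_fun]
        · rw [if_neg (fun hm => h (Finset.mem_Iic.mp hm))]
          exact Fintype.card_eq_one_iff.mpr
            ⟨fun h' => absurd h' h, fun f => funext fun h' => absurd h' h⟩
      simp_rw [this]
      rw [Finset.prod_ite_mem, Finset.univ_inter]
    calc P {ω | p N ω} ≤ P (⋃ τ, A τ) := measure_mono hsub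
      _ ≤ ∑' τ, P (A τ) := measure_iUnion_le _
      _ = (Fintype.card (∀ i : Fin n, i ≤ j₀ → Fin (k i N) → Bool) : ℝ≥0∞) *
            ∏ i ∈ Finset.Iic j₀, lam i N (Δ i) := by
          simp_rw [hAP]; rw [tsum_fintype]; simp [Finset.sum_const, nsmul_eq_mul]
      _ = ENNReal.ofReal (∏ i ∈ Finset.Iic j₀, (2 : ℝ) ^ k i N * (lam i N (Δ i)).toReal) := by
          rw [hcard, ENNReal.ofReal_prod_of_nonneg
            (fun i _ => mul_nonneg (by positivity) ENNReal.toReal_nonneg)]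
          rw [Nat.cast_prod, ← Finset.prod_mul_distrib]
          refine Finset.prod_congr rfl fun i _ => ?_
          rw [ENNReal.ofReal_mul (by positivity), ENNReal.ofReal_pow (by norm_num),
            ENNReal.ofReal_toReal (measure_ne_top _ _), ENNReal.ofReal_ofNat]
          norm_num
  -- Borel–Cantelli
  have htsum : ∑' N, P {ω | p N ω} ≠ ∞ := by
    refine ne_top_of_le_ne_top ?_ (ENNReal.tsum_le_tsum key)
    rw [← ENNReal.ofReal_tsum_of_nonneg hnonneg hsum]
    exact ENNReal.ofReal_ne_top
  have hBC := MeasureTheory.measure_setOf_frequently_eq_zero (p := p) (μ := P) htsum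
  have hae : ∀ᵐ ω ∂P, ∀ᶠ N in atTop, ¬ p N ω := by
    rw [ae_iff]
    exact hBC
  filter_upwards [hae] with ω hω
  filter_upwards [hω] with N hN
  have hnot : ∀ σ : (∀ i : Fin n, Fin (k i N) → Bool),
      (fun j : Fin n => ξ N j (fun i _ => σ i) ω) ∉ Set.univ.pi Δ := by
    intro σ hmem
    exact hN ⟨fun i _ => σ i, fun i h => hmem i (Set.mem_univ i)⟩
  have hSm : MeasurableSet (Set.univ.pi Δ) := MeasurableSet.univ_pi hΔm
  rw [empMeasure, Measure.smul_apply, Measure.finset_sum_apply]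
  rw [Finset.sum_eq_zero fun a _ => by
    rw [Measure.dirac_apply' _ hSm, Set.indicator_of_notMem (hnot a)], smul_zero]
end

section
/- (GREM, Step 2) Let Δ = Δ₁ × ⋯ × Δ_n be a box in ℝⁿ with interval sides such that λ_N^i(Δ_i) > 0 for all i and N. If for every 1 ≤ j ≤ n one has ∑_{N≥n} ∏_{i=1}^j 1/(2^{k(i,N)} λ_N^i(Δ_i)) < ∞, then for every ε > 0, almost surely there exists N₀ such that for all N ≥ N₀ one has (1−ε) ∏_{i=1}^n λ_N^i(Δ_i) ≤ μ_N(ω)(Δ) ≤ (1+ε) ∏_{i=1}^n λ_N^i(Δ_i). -/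
open MeasureTheory ProbabilityTheory Filter
open scoped ENNReal NNReal

set_option linter.unusedSectionVars false
set_option maxHeartbeats 1000000

section GremCount

/-- Counting lemma: the number of `τ` agreeing with `σ` on a finset `s` of coordinates. -/
lemma grem_count {n' : Type*} [Fintype n'] [DecidableEq n'] {β : n' → Type*}
    [∀ i, Fintype (β i)] [∀ i, DecidableEq (β i)] (s : Finset n') (σ : ∀ i, β i) :
    ∑ τ : ∀ i, β i, (if ∀ i ∈ s, σ i = τ i then (1:ℝ) else 0) =
      ∏ i ∈ sᶜ, (Fintype.card (β i) : ℝ) := by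
  have h1 : ∀ τ : ∀ i, β i, (if ∀ i ∈ s, σ i = τ i then (1:ℝ) else 0) =
      ∏ i : n', (if i ∈ s then (if σ i = τ i then (1:ℝ) else 0) else 1) := by
    intro τ
    by_cases h : ∀ i ∈ s, σ i = τ i
    · rw [if_pos h, eq_comm]
      apply Finset.prod_eq_one
      intro i _
      by_cases hi : i ∈ s
      · simp [hi, h i hi]
      · simp [hi]
    · rw [if_neg h]
      push_neg at h
      obtain ⟨i, hi, hne⟩ := h
      rw [eq_comm]
      apply Finset.prod_eq_zero (Finset.mem_univ i)
      simp [hi, hne]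
  simp_rw [h1]
  rw [← Fintype.piFinset_univ]
  have hps := Finset.prod_univ_sum (fun i => (Finset.univ : Finset (β i)))
    (fun i b => if i ∈ s then (if σ i = b then (1:ℝ) else 0) else 1)
  rw [← hps]
  rw [← Finset.prod_mul_prod_compl s]
  have h2 : ∀ i ∈ s, (∑ x : β i, if i ∈ s then (if σ i = x then (1:ℝ) else 0) else 1) = 1 := by
    intro i hi
    simp only [if_pos hi]
    rw [Finset.sum_ite_eq Finset.univ (σ i) (fun _ => (1:ℝ))]
    simp
  have h3 : ∀ i ∈ sᶜ, (∑ x : β i, if i ∈ s then (if σ i = x then (1:ℝ) else 0) else 1)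
      = (Fintype.card (β i) : ℝ) := by
    intro i hi
    rw [Finset.mem_compl] at hi
    simp [hi, Finset.card_univ]
  rw [Finset.prod_congr rfl h2, Finset.prod_congr rfl h3, Finset.prod_const_one, one_mul]

end GremCount

section Abstract
variable {Ω : Type*} [MeasurableSpace Ω] {P : Measure Ω} [IsProbabilityMeasure P]
variable {ι : Type*} [Fintype ι] [DecidableEq ι] {A : ι → Set Ω}
variable {α : Type*} [Fintype α]

/-- The normalized count of configurations whose events all occur. -/
noncomputable def gremX (A : ι → Set Ω) (T : α → Finset ι) (ω : Ω) : ℝ :=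
  (Fintype.card α : ℝ)⁻¹ * ∑ a : α, Set.indicator (⋂ i ∈ T a, A i) (fun _ => (1:ℝ)) ω

lemma gremX_nonneg (T : α → Finset ι) (ω : Ω) : 0 ≤ gremX A T ω := by
  apply mul_nonneg (by positivity)
  exact Finset.sum_nonneg fun a _ => Set.indicator_nonneg (fun _ _ => zero_le_one) _

lemma gremX_measurable (hA : ∀ i, MeasurableSet (A i)) (T : α → Finset ι) :
    Measurable (gremX A T) := by
  apply Measurable.const_mul
  exact Finset.measurable_sum _ fun a _ =>
    (measurable_const.indicator (Finset.measurableSet_biInter _ fun i _ => hA i))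

lemma gremX_memℒp (hA : ∀ i, MeasurableSet (A i)) (T : α → Finset ι) :
    MemLp (gremX A T) 2 P := by
  apply MemLp.of_bound (gremX_measurable hA T).aestronglyMeasurable 1
  filter_upwards with ω
  rw [Real.norm_eq_abs, abs_of_nonneg (gremX_nonneg T ω)]
  rw [gremX]
  rcases Nat.eq_zero_or_pos (Fintype.card α) with h | h
  · simp [h]
  calc (Fintype.card α : ℝ)⁻¹ * ∑ a : α, Set.indicator (⋂ i ∈ T a, A i) (fun _ => (1:ℝ)) ω
      ≤ (Fintype.card α : ℝ)⁻¹ * ∑ _a : α, 1 := by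
        apply mul_le_mul_of_nonneg_left _ (by positivity)
        exact Finset.sum_le_sum fun a _ => Set.indicator_le_self' (fun _ _ => zero_le_one) ω
    _ = 1 := by
        rw [Finset.sum_const, Finset.card_univ, nsmul_eq_mul, mul_one,
          inv_mul_cancel₀ (by exact_mod_cast h.ne')]

lemma gremX_integrable_aux (hA : ∀ i, MeasurableSet (A i)) (S : Finset ι) :
    Integrable (Set.indicator (⋂ i ∈ S, A i) (fun _ => (1:ℝ))) P :=
  (integrable_const (1:ℝ)).indicator (Finset.measurableSet_biInter _ fun i _ => hA i)

lemma gremX_integral (hA : ∀ i, MeasurableSet (A i)) (T : α → Finset ι) :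
    ∫ ω, gremX A T ω ∂P =
      (Fintype.card α : ℝ)⁻¹ * ∑ a : α, (P (⋂ i ∈ T a, A i)).toReal := by
  simp only [gremX]
  rw [integral_const_mul, integral_finset_sum _ (fun a _ => gremX_integrable_aux hA (T a))]
  congr 1
  refine Finset.sum_congr rfl fun a _ => ?_
  rw [integral_indicator_const (1:ℝ) (Finset.measurableSet_biInter _ fun i _ => hA i)]
  simp [Measure.real]

lemma gremX_sq (T : α → Finset ι) (ω : Ω) :
    (gremX A T ω) ^ 2 = (Fintype.card α : ℝ)⁻¹ ^ 2 *
      ∑ a : α, ∑ b : α, Set.indicator (⋂ i ∈ T a ∪ T b, A i) (fun _ => (1:ℝ)) ω := by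
  simp only [gremX]
  rw [mul_pow, sq (∑ a : α, _), Finset.sum_mul_sum]
  congr 1
  refine Finset.sum_congr rfl fun a _ => Finset.sum_congr rfl fun b _ => ?_
  have h1 : (⋂ i ∈ T a ∪ T b, A i) = (⋂ i ∈ T a, A i) ∩ (⋂ i ∈ T b, A i) := by
    ext ω'; simp only [Set.mem_iInter, Set.mem_inter_iff, Finset.mem_union]
    constructor
    · intro h; exact ⟨fun i hi => h i (Or.inl hi), fun i hi => h i (Or.inr hi)⟩
    · rintro ⟨h1, h2⟩ i (hi | hi); exacts [h1 i hi, h2 i hi]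
  rw [h1]
  have := Set.inter_indicator_one (M₀ := ℝ) (s := ⋂ i ∈ T a, A i) (t := ⋂ i ∈ T b, A i)
  have h2 : ∀ s : Set Ω, Set.indicator s (fun _ => (1:ℝ)) = Set.indicator s (1 : Ω → ℝ) := by
    intro s; rfl
  rw [h2, h2, h2, this]
  rfl

lemma gremX_integral_sq (hA : ∀ i, MeasurableSet (A i)) (T : α → Finset ι) :
    ∫ ω, (gremX A T ω) ^ 2 ∂P = (Fintype.card α : ℝ)⁻¹ ^ 2 *
      ∑ a : α, ∑ b : α, (P (⋂ i ∈ T a ∪ T b, A i)).toReal := by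
  simp only [gremX_sq]
  rw [integral_const_mul, integral_finset_sum _ (fun a _ =>
    integrable_finset_sum _ (fun b _ => gremX_integrable_aux hA (T a ∪ T b)))]
  congr 1
  refine Finset.sum_congr rfl fun a _ => ?_
  rw [integral_finset_sum _ (fun b _ => gremX_integrable_aux hA (T a ∪ T b))]
  refine Finset.sum_congr rfl fun b _ => ?_
  rw [integral_indicator_const (1:ℝ) (Finset.measurableSet_biInter _ fun i _ => hA i)]
  simp [Measure.real]

lemma gremX_variance (hA : ∀ i, MeasurableSet (A i)) (T : α → Finset ι) :
    variance (gremX A T) P = (Fintype.card α : ℝ)⁻¹ ^ 2 *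
      ∑ a : α, ∑ b : α, ((P (⋂ i ∈ T a ∪ T b, A i)).toReal
        - (P (⋂ i ∈ T a, A i)).toReal * (P (⋂ i ∈ T b, A i)).toReal) := by
  rw [variance_eq_sub (gremX_memℒp hA T)]
  have h1 : P[(gremX A T) ^ 2] = ∫ ω, (gremX A T ω) ^ 2 ∂P := rfl
  rw [h1, gremX_integral_sq hA T, gremX_integral hA T]
  rw [mul_pow, sq (∑ a : α, (P (⋂ i ∈ T a, A i)).toReal), Finset.sum_mul_sum, ← mul_sub]
  congr 1
  rw [← Finset.sum_sub_distrib]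
  refine Finset.sum_congr rfl fun a _ => ?_
  rw [← Finset.sum_sub_distrib]

end Abstract

section Spec
variable {Ω : Type*} [MeasurableSpace Ω] {P : Measure Ω} [IsProbabilityMeasure P]
variable {n : ℕ} {k : Fin n → ℕ → ℕ} {N : ℕ}

/-- Index type for the independent variables at level `N`. -/
abbrev gremQ (n : ℕ) (k : Fin n → ℕ → ℕ) (N : ℕ) :=
  Σ j : Fin n, ((i : Fin n) → i ≤ j → (Fin (k i N) → Bool))

/-- The tree-indices visited by a configuration `σ`. -/
noncomputable def gremT (σ : ∀ i : Fin n, Fin (k i N) → Bool) : Finset (gremQ n k N) :=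
  Finset.univ.image fun j => ⟨j, fun i _ => σ i⟩

lemma gremT_prod (σ : ∀ i : Fin n, Fin (k i N) → Bool) (f : gremQ n k N → ℝ) :
    ∏ q ∈ gremT σ, f q = ∏ j : Fin n, f ⟨j, fun i _ => σ i⟩ := by
  rw [gremT, Finset.prod_image]
  intro x _ y _ h
  exact congrArg Sigma.fst h

lemma gremT_inter (σ τ : ∀ i : Fin n, Fin (k i N) → Bool) :
    gremT σ ∩ gremT τ = Finset.image (fun j => (⟨j, fun i _ => σ i⟩ : gremQ n k N))
      (Finset.univ.filter fun j : Fin n => ∀ i, i ≤ j → σ i = τ i) := by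
  ext q
  simp only [gremT, Finset.mem_inter, Finset.mem_image, Finset.mem_filter, Finset.mem_univ,
    true_and]
  constructor
  · rintro ⟨⟨j1, h1⟩, ⟨j2, h2⟩⟩
    refine ⟨j1, ?_, h1⟩
    subst h1
    obtain ⟨hj, hf⟩ := Sigma.mk.inj_iff.mp h2
    subst hj
    have hf' := eq_of_heq hf
    intro i hi
    exact (congrFun (congrFun hf' i) hi).symm
  · rintro ⟨j, hagree, hq⟩
    refine ⟨⟨j, hq⟩, ⟨j, ?_⟩⟩
    rw [← hq]
    congr 1
    funext i hi
    exact (hagree i hi).symm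

lemma gremT_mem_inter (σ : ∀ i : Fin n, Fin (k i N) → Bool) (ω : Ω)
    (A : gremQ n k N → Set Ω) :
    ω ∈ ⋂ q ∈ gremT σ, A q ↔ ∀ j : Fin n, ω ∈ A ⟨j, fun i _ => σ i⟩ := by
  simp only [Set.mem_iInter, gremT, Finset.mem_image, Finset.mem_univ, true_and]
  constructor
  · intro h j; exact h _ ⟨j, rfl⟩
  · rintro h q ⟨j, rfl⟩; exact h j

lemma gremCardConfig : (Fintype.card (∀ i : Fin n, Fin (k i N) → Bool) : ℝ) =
    ∏ i : Fin n, (2:ℝ) ^ k i N := by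
  rw [Fintype.card_pi]
  push_cast
  refine Finset.prod_congr rfl fun i _ => ?_
  rw [Fintype.card_fun]
  simp

lemma grem_pair_bound (rr : Fin n → ℝ) (h0 : ∀ j, 0 < rr j) (h1 : ∀ j, rr j ≤ 1)
    (σ τ : ∀ i : Fin n, Fin (k i N) → Bool) :
    (∏ q ∈ gremT σ ∪ gremT τ, rr q.1) - (∏ q ∈ gremT σ, rr q.1) * (∏ q ∈ gremT τ, rr q.1)
      ≤ ∑ m : Fin n, (if ∀ i ∈ Finset.Iic m, σ i = τ i
          then ((∏ j, rr j) ^ 2) * ∏ i ∈ Finset.Iic m, (rr i)⁻¹ else 0) := by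
  set M : ℝ := ∏ j, rr j with hM
  have hMpos : 0 < M := Finset.prod_pos fun j _ => h0 j
  have hTσ : ∏ q ∈ gremT σ, (rr q.1) = M := gremT_prod σ fun q => rr q.1
  have hTτ : ∏ q ∈ gremT τ, (rr q.1) = M := gremT_prod τ fun q => rr q.1
  set J : Finset (Fin n) := Finset.univ.filter (fun j : Fin n => ∀ i, i ≤ j → σ i = τ i)
    with hJ
  have hInterProd : ∏ q ∈ gremT σ ∩ gremT τ, (rr q.1) = ∏ j ∈ J, rr j := by
    rw [gremT_inter, Finset.prod_image]
    intro x _ y _ h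
    exact congrArg Sigma.fst h
  have hJpos : 0 < ∏ j ∈ J, rr j := Finset.prod_pos fun j _ => h0 j
  have hUnion : ∏ q ∈ gremT σ ∪ gremT τ, (rr q.1) = M ^ 2 * (∏ j ∈ J, rr j)⁻¹ := by
    have h := Finset.prod_union_inter (s₁ := gremT σ) (s₂ := gremT τ) (f := fun q => rr q.1)
    rw [hTσ, hTτ, hInterProd] at h
    rw [sq, ← h, mul_assoc, mul_inv_cancel₀ hJpos.ne', mul_one]
  rw [hUnion, hTσ, hTτ, ← sq]
  have hnonneg : ∀ m : Fin n, 0 ≤ (if ∀ i ∈ Finset.Iic m, σ i = τ i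
      then (M ^ 2) * ∏ i ∈ Finset.Iic m, (rr i)⁻¹ else 0) := by
    intro m
    split
    · apply mul_nonneg (sq_nonneg _)
      exact Finset.prod_nonneg fun i _ => inv_nonneg.mpr (h0 i).le
    · exact le_refl 0
  rcases J.eq_empty_or_nonempty with hJe | hJne
  · rw [hJe]
    simp only [Finset.prod_empty, inv_one, mul_one, sub_self]
    exact Finset.sum_nonneg fun m _ => hnonneg m
  · set m₀ : Fin n := J.max' hJne with hm₀
    have hm₀J : m₀ ∈ J := J.max'_mem hJne
    have hagree : ∀ i ∈ Finset.Iic m₀, σ i = τ i := by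
      intro i hi
      exact (Finset.mem_filter.mp hm₀J).2 i (Finset.mem_Iic.mp hi)
    have hsub : J ⊆ Finset.Iic m₀ := by
      intro j hj
      exact Finset.mem_Iic.mpr (J.le_max' j hj)
    have h1inv : ∀ i : Fin n, 1 ≤ (rr i)⁻¹ := fun i =>
      one_le_inv_iff₀.mpr ⟨h0 i, h1 i⟩
    calc M ^ 2 * (∏ j ∈ J, rr j)⁻¹ - M ^ 2
        ≤ M ^ 2 * (∏ j ∈ J, rr j)⁻¹ := sub_le_self _ (sq_nonneg M)
      _ = M ^ 2 * ∏ j ∈ J, (rr j)⁻¹ := by rw [Finset.prod_inv_distrib]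
      _ ≤ M ^ 2 * ∏ i ∈ Finset.Iic m₀, (rr i)⁻¹ := by
          apply mul_le_mul_of_nonneg_left _ (sq_nonneg M)
          rw [← Finset.prod_sdiff hsub]
          apply le_mul_of_one_le_left
            (Finset.prod_nonneg fun i _ => inv_nonneg.mpr (h0 i).le)
          have := Finset.prod_le_prod (s := Finset.Iic m₀ \ J)
            (f := fun _ => (1:ℝ)) (g := fun i => (rr i)⁻¹)
            (fun i _ => zero_le_one) (fun i _ => h1inv i)
          simpa using this
      _ = (if ∀ i ∈ Finset.Iic m₀, σ i = τ i
            then (M ^ 2) * ∏ i ∈ Finset.Iic m₀, (rr i)⁻¹ else 0) := by rw [if_pos hagree]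
      _ ≤ _ := Finset.single_le_sum (fun m _ => hnonneg m) (Finset.mem_univ m₀)

/-- Variance bound for the GREM empirical count. -/
lemma grem_var_le (A : gremQ n k N → Set Ω) (hA : ∀ q, MeasurableSet (A q))
    (hInd : ∀ S : Finset (gremQ n k N), P (⋂ q ∈ S, A q) = ∏ q ∈ S, P (A q))
    (rr : Fin n → ℝ) (hP : ∀ q : gremQ n k N, (P (A q)).toReal = rr q.1)
    (h0 : ∀ j, 0 < rr j) (h1 : ∀ j, rr j ≤ 1) :
    variance (gremX A gremT) P ≤
      (∏ j, rr j) ^ 2 * ∑ m : Fin n, ∏ i ∈ Finset.Iic m, (((2:ℝ) ^ k i N) * rr i)⁻¹ := by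
  have hconv : ∀ S : Finset (gremQ n k N), (P (⋂ q ∈ S, A q)).toReal = ∏ q ∈ S, rr q.1 := by
    intro S
    rw [hInd, ENNReal.toReal_prod]
    exact Finset.prod_congr rfl fun q _ => hP q
  rw [gremX_variance hA gremT]
  set α := ∀ i : Fin n, Fin (k i N) → Bool
  set c : ℝ := (Fintype.card α : ℝ)⁻¹ with hc
  set M : ℝ := ∏ j, rr j with hM
  have hKpos : ∀ i : Fin n, (0:ℝ) < (2:ℝ) ^ k i N := fun i => by positivity
  have hcard : (Fintype.card α : ℝ) = ∏ i : Fin n, (2:ℝ) ^ k i N := gremCardConfig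
  have hcardpos : (0:ℝ) < (Fintype.card α : ℝ) := by
    rw [hcard]; exact Finset.prod_pos fun i _ => hKpos i
  calc c ^ 2 * ∑ a : α, ∑ b : α, ((P (⋂ i ∈ gremT a ∪ gremT b, A i)).toReal
        - (P (⋂ i ∈ gremT a, A i)).toReal * (P (⋂ i ∈ gremT b, A i)).toReal)
      ≤ c ^ 2 * ∑ σ : α, ∑ τ : α, ∑ m : Fin n, (if ∀ i ∈ Finset.Iic m, σ i = τ i
          then (M ^ 2) * ∏ i ∈ Finset.Iic m, (rr i)⁻¹ else 0) := by
        apply mul_le_mul_of_nonneg_left _ (by positivity)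
        apply Finset.sum_le_sum; intro σ _
        apply Finset.sum_le_sum; intro τ _
        rw [hconv, hconv, hconv]
        exact grem_pair_bound rr h0 h1 σ τ
    _ = c ^ 2 * ∑ m : Fin n, ∑ σ : α, ∑ τ : α, (if ∀ i ∈ Finset.Iic m, σ i = τ i
          then (M ^ 2) * ∏ i ∈ Finset.Iic m, (rr i)⁻¹ else 0) := by
        congr 1
        rw [show (∑ σ : α, ∑ τ : α, ∑ m : Fin n, (if ∀ i ∈ Finset.Iic m, σ i = τ i
            then (M ^ 2) * ∏ i ∈ Finset.Iic m, (rr i)⁻¹ else 0))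
          = ∑ σ : α, ∑ m : Fin n, ∑ τ : α, (if ∀ i ∈ Finset.Iic m, σ i = τ i
            then (M ^ 2) * ∏ i ∈ Finset.Iic m, (rr i)⁻¹ else 0)
          from Finset.sum_congr rfl fun σ _ => Finset.sum_comm]
        exact Finset.sum_comm
    _ = M ^ 2 * ∑ m : Fin n, ∏ i ∈ Finset.Iic m, (((2:ℝ) ^ k i N) * rr i)⁻¹ := by
        rw [Finset.mul_sum, Finset.mul_sum]
        refine Finset.sum_congr rfl fun m _ => ?_
        have hsplit : ∀ σ τ : α, (if ∀ i ∈ Finset.Iic m, σ i = τ i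
            then (M ^ 2) * ∏ i ∈ Finset.Iic m, (rr i)⁻¹ else 0)
            = ((M ^ 2) * ∏ i ∈ Finset.Iic m, (rr i)⁻¹) *
              (if ∀ i ∈ Finset.Iic m, σ i = τ i then (1:ℝ) else 0) := by
          intro σ τ; split <;> simp
        simp_rw [hsplit, ← Finset.mul_sum]
        have hcnt : ∀ σ : α, ∑ τ : α, (if ∀ i ∈ Finset.Iic m, σ i = τ i then (1:ℝ) else 0)
            = ∏ i ∈ (Finset.Iic m)ᶜ, ((2:ℝ) ^ k i N) := by
          intro σ
          refine Eq.trans (Eq.trans ?_ (grem_count (Finset.Iic m) σ)) ?_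
          · refine Finset.sum_congr rfl fun τ _ => ?_
            congr 1
          · refine Finset.prod_congr rfl fun i _ => ?_
            rw [Fintype.card_fun]
            push_cast
            simp
        simp_rw [hcnt]
        rw [Finset.sum_const, Finset.card_univ, nsmul_eq_mul]
        have hKsplit : (∏ i ∈ Finset.Iic m, ((2:ℝ) ^ k i N)) *
            ∏ i ∈ (Finset.Iic m)ᶜ, ((2:ℝ) ^ k i N) = (Fintype.card α : ℝ) := by
          rw [Finset.prod_mul_prod_compl, hcard]
        have hIpos : (0:ℝ) < ∏ i ∈ Finset.Iic m, ((2:ℝ) ^ k i N) :=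
          Finset.prod_pos fun i _ => hKpos i
        have hCpos : (0:ℝ) < ∏ i ∈ (Finset.Iic m)ᶜ, ((2:ℝ) ^ k i N) :=
          Finset.prod_pos fun i _ => hKpos i
        have hrhs : ∏ i ∈ Finset.Iic m, (((2:ℝ) ^ k i N) * rr i)⁻¹
            = (∏ i ∈ Finset.Iic m, ((2:ℝ) ^ k i N))⁻¹ * ∏ i ∈ Finset.Iic m, (rr i)⁻¹ := by
          simp_rw [mul_inv]
          rw [Finset.prod_mul_distrib, Finset.prod_inv_distrib]
        have key : ∀ (a b R M2 : ℝ), a ≠ 0 → b ≠ 0 →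
            ((a*b))⁻¹ ^ 2 * ((M2 * R) * ((a*b) * b)) = M2 * (a⁻¹ * R) := by
          intro a b R M2 ha hb
          field_simp
        rw [hrhs, hc, ← hKsplit]
        exact key _ _ _ _ hIpos.ne' hCpos.ne'

/-- The mean of the GREM empirical count. -/
lemma grem_mean (A : gremQ n k N → Set Ω) (hA : ∀ q, MeasurableSet (A q))
    (hInd : ∀ S : Finset (gremQ n k N), P (⋂ q ∈ S, A q) = ∏ q ∈ S, P (A q))
    (rr : Fin n → ℝ) (hP : ∀ q : gremQ n k N, (P (A q)).toReal = rr q.1) :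
    ∫ ω, gremX A gremT ω ∂P = ∏ j, rr j := by
  rw [gremX_integral hA gremT]
  have hconv : ∀ σ : ∀ i : Fin n, Fin (k i N) → Bool,
      (P (⋂ q ∈ gremT σ, A q)).toReal = ∏ j, rr j := by
    intro σ
    rw [hInd, ENNReal.toReal_prod]
    rw [show (∏ q ∈ gremT σ, (P (A q)).toReal) = ∏ q ∈ gremT σ, rr q.1 from
      Finset.prod_congr rfl fun q _ => hP q]
    exact gremT_prod σ fun q => rr q.1
  rw [Finset.sum_congr rfl fun σ _ => hconv σ, Finset.sum_const, Finset.card_univ,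
    nsmul_eq_mul, ← mul_assoc]
  have hpos : (0:ℝ) < (Fintype.card (∀ i : Fin n, Fin (k i N) → Bool) : ℝ) := by
    rw [gremCardConfig]
    exact Finset.prod_pos fun i _ => by positivity
  rw [inv_mul_cancel₀ hpos.ne', one_mul]

end Spec

section Spec2
variable {Ω : Type*} [MeasurableSpace Ω] {P : Measure Ω} [IsProbabilityMeasure P]
variable {n : ℕ} {k : Fin n → ℕ → ℕ} {N : ℕ}

/-- Chebyshev bound for the GREM empirical count. -/
lemma grem_cheb (A : gremQ n k N → Set Ω) (hA : ∀ q, MeasurableSet (A q))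
    (hInd : ∀ S : Finset (gremQ n k N), P (⋂ q ∈ S, A q) = ∏ q ∈ S, P (A q))
    (rr : Fin n → ℝ) (hP : ∀ q : gremQ n k N, (P (A q)).toReal = rr q.1)
    (h0 : ∀ j, 0 < rr j) (h1 : ∀ j, rr j ≤ 1) (ε : ℝ) (hε : 0 < ε) :
    P {ω | ε * (∏ j, rr j) ≤ |gremX A gremT ω - ∏ j, rr j|} ≤
      ENNReal.ofReal (ε⁻¹ ^ 2 *
        ∑ m : Fin n, ∏ i ∈ Finset.Iic m, (((2:ℝ) ^ k i N) * rr i)⁻¹) := by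
  have hMpos : 0 < ∏ j, rr j := Finset.prod_pos fun j _ => h0 j
  have hc : 0 < ε * ∏ j, rr j := mul_pos hε hMpos
  have h := meas_ge_le_variance_div_sq (μ := P) (gremX_memℒp hA gremT) hc
  rw [show P[gremX A gremT] = ∏ j, rr j from grem_mean A hA hInd rr hP] at h
  refine h.trans (ENNReal.ofReal_le_ofReal ?_)
  have hvar := grem_var_le A hA hInd rr hP h0 h1
  have hd : (0:ℝ) < (ε * ∏ j, rr j) ^ 2 := by positivity
  calc variance (gremX A gremT) P / (ε * ∏ j, rr j) ^ 2
      ≤ ((∏ j, rr j) ^ 2 * ∑ m : Fin n, ∏ i ∈ Finset.Iic m, (((2:ℝ) ^ k i N) * rr i)⁻¹) /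
          (ε * ∏ j, rr j) ^ 2 := by
        exact div_le_div_of_nonneg_right hvar hd.le
    _ = ε⁻¹ ^ 2 * ∑ m : Fin n, ∏ i ∈ Finset.Iic m, (((2:ℝ) ^ k i N) * rr i)⁻¹ := by
        field_simp

/-- Identification of the empirical measure with the normalized count. -/
lemma grem_emp (ξN : (j : Fin n) → ((i : Fin n) → i ≤ j → (Fin (k i N) → Bool)) → Ω → ℝ)
    (Δ : Fin n → Set ℝ) (hΔm : ∀ i, MeasurableSet (Δ i)) (ω : Ω) :
    empMeasure (fun σ : (∀ i : Fin n, Fin (k i N) → Bool) =>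
        fun j : Fin n => ξN j (fun i _ => σ i) ω) (Set.univ.pi Δ)
      = ENNReal.ofReal
          (gremX (fun q : gremQ n k N => ξN q.1 q.2 ⁻¹' Δ q.1) gremT ω) := by
  classical
  set α := ∀ i : Fin n, Fin (k i N) → Bool with hα
  have hpi : MeasurableSet (Set.univ.pi Δ) := MeasurableSet.univ_pi hΔm
  have hcardpos : 0 < (Fintype.card α : ℝ) := by
    rw [gremCardConfig]
    exact Finset.prod_pos fun i _ => by positivity
  have hiff : ∀ σ : α, ((fun j : Fin n => ξN j (fun i _ => σ i) ω) ∈ Set.univ.pi Δ) ↔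
      ω ∈ ⋂ q ∈ gremT σ, (ξN q.1 q.2 ⁻¹' Δ q.1) := by
    intro σ
    rw [gremT_mem_inter, Set.mem_univ_pi]
    simp [Set.mem_preimage]
  rw [empMeasure, Measure.smul_apply, Measure.finset_sum_apply, smul_eq_mul]
  have hL : ∀ σ : α, Measure.dirac (fun j : Fin n => ξN j (fun i _ => σ i) ω)
      (Set.univ.pi Δ) =
      (if ω ∈ ⋂ q ∈ gremT σ, (ξN q.1 q.2 ⁻¹' Δ q.1) then (1:ℝ≥0∞) else 0) := by
    intro σ
    rw [Measure.dirac_apply' _ hpi, Set.indicator_apply]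
    exact if_congr (hiff σ) rfl rfl
  rw [Finset.sum_congr rfl fun σ _ => hL σ]
  have hR : ENNReal.ofReal
      (gremX (fun q : gremQ n k N => ξN q.1 q.2 ⁻¹' Δ q.1) gremT ω)
      = (Fintype.card α : ℝ≥0∞)⁻¹ *
        ∑ σ : α, (if ω ∈ ⋂ q ∈ gremT σ, (ξN q.1 q.2 ⁻¹' Δ q.1) then (1:ℝ≥0∞) else 0) := by
    rw [gremX, ENNReal.ofReal_mul (by positivity)]
    rw [ENNReal.ofReal_sum_of_nonneg
      (fun σ _ => Set.indicator_nonneg (fun _ _ => zero_le_one) _)]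
    rw [ENNReal.ofReal_inv_of_pos hcardpos, ENNReal.ofReal_natCast]
    congr 1
    refine Finset.sum_congr rfl fun σ _ => ?_
    rw [Set.indicator_apply]
    split <;> simp
  rw [hR]

end Spec2

/-- **GREM, Step 2.** If for every `j`, `∑_N ∏_{i ≤ j} 1/(2^{k(i,N)} λ_N^i(Δ_i)) < ∞`,
then for every `ε > 0`, almost surely, eventually in `N`,
`(1-ε) ∏_i λ_N^i(Δ_i) ≤ μ_N(Δ) ≤ (1+ε) ∏_i λ_N^i(Δ_i)`. -/
theorem grem_step2
    {Ω : Type*} [MeasurableSpace Ω] (P : Measure Ω) [IsProbabilityMeasure P]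
    (n : ℕ) (hn : 1 ≤ n)
    (k : Fin n → ℕ → ℕ) (hk : ∀ N : ℕ, ∑ j : Fin n, k j N = N)
    (lam : Fin n → ℕ → Measure ℝ) (hlam : ∀ j N, IsProbabilityMeasure (lam j N))
    (ξ : (N : ℕ) → (j : Fin n) → ((i : Fin n) → i ≤ j → (Fin (k i N) → Bool)) → Ω → ℝ)
    (hmeas : ∀ N j c, Measurable (ξ N j c))
    (hindep : ∀ N : ℕ, iIndepFun
      (fun q : Σ j : Fin n, ((i : Fin n) → i ≤ j → (Fin (k i N) → Bool)) =>
        ξ N q.1 q.2) P)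
    (hdist : ∀ N j c, P.map (ξ N j c) = lam j N)
    (Δ : Fin n → Set ℝ) (hΔ : ∀ i, (Δ i).OrdConnected) (hΔm : ∀ i, MeasurableSet (Δ i))
    (hpos : ∀ i N, 0 < lam i N (Δ i))
    (hsum : ∀ j : Fin n, Summable fun N : ℕ =>
      ∏ i ∈ Finset.Iic j, ((2 : ℝ) ^ k i N * (lam i N (Δ i)).toReal)⁻¹)
    (ε : ℝ) (hε : 0 < ε) :
    ∀ᵐ ω ∂P, ∀ᶠ N in atTop,
      ENNReal.ofReal (1 - ε) * ∏ i : Fin n, lam i N (Δ i) ≤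
        empMeasure
          (fun σ : (∀ i : Fin n, Fin (k i N) → Bool) =>
            fun j : Fin n => ξ N j (fun i _ => σ i) ω)
          (Set.univ.pi Δ) ∧
      empMeasure
          (fun σ : (∀ i : Fin n, Fin (k i N) → Bool) =>
            fun j : Fin n => ξ N j (fun i _ => σ i) ω)
          (Set.univ.pi Δ) ≤
        ENNReal.ofReal (1 + ε) * ∏ i : Fin n, lam i N (Δ i) := by
  classical
  -- notation
  set rr : ℕ → Fin n → ℝ := fun N j => (lam j N (Δ j)).toReal with hrr
  set A : (N : ℕ) → gremQ n k N → Set Ω := fun N q => ξ N q.1 q.2 ⁻¹' Δ q.1 with hAdef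
  have hA : ∀ N q, MeasurableSet (A N q) := fun N q => hmeas N q.1 q.2 (hΔm q.1)
  have hPA : ∀ N (q : gremQ n k N), P (A N q) = lam q.1 N (Δ q.1) := by
    intro N q
    rw [hAdef, ← hdist N q.1 q.2, Measure.map_apply (hmeas N q.1 q.2) (hΔm q.1)]
  have hP : ∀ N (q : gremQ n k N), (P (A N q)).toReal = rr N q.1 := fun N q => by
    rw [hPA]
  have h0 : ∀ N j, 0 < rr N j := fun N j =>
    ENNReal.toReal_pos (hpos j N).ne' (measure_ne_top _ _)
  have h1 : ∀ N j, rr N j ≤ 1 := by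
    intro N j
    have hle : lam j N (Δ j) ≤ 1 := prob_le_one
    calc (lam j N (Δ j)).toReal ≤ (1 : ℝ≥0∞).toReal :=
          ENNReal.toReal_mono ENNReal.one_ne_top hle
      _ = 1 := by simp
  have hInd : ∀ N (S : Finset (gremQ n k N)),
      P (⋂ q ∈ S, A N q) = ∏ q ∈ S, P (A N q) := by
    intro N S
    exact (hindep N).meas_biInter (fun q _ => ⟨Δ q.1, hΔm q.1, rfl⟩)
  set M : ℕ → ℝ := fun N => ∏ j, rr N j with hMdef
  have hMpos : ∀ N, 0 < M N := fun N => Finset.prod_pos fun j _ => h0 N j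
  set t : ℕ → ℝ := fun N =>
    ∑ m : Fin n, ∏ i ∈ Finset.Iic m, (((2:ℝ) ^ k i N) * rr N i)⁻¹ with htdef
  have ht0 : ∀ N, 0 ≤ t N := by
    intro N
    refine Finset.sum_nonneg fun m _ => Finset.prod_nonneg fun i _ => ?_
    positivity
  -- the bad events
  set B : ℕ → Set Ω := fun N => {ω | ε * M N ≤ |gremX (A N) gremT ω - M N|} with hBdef
  have hBle : ∀ N, P (B N) ≤ ENNReal.ofReal (ε⁻¹ ^ 2 * t N) := by
    intro N
    exact grem_cheb (A N) (hA N) (hInd N) (rr N) (hP N) (h0 N) (h1 N) ε hε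
  have hts : Summable (fun N => ε⁻¹ ^ 2 * t N) := by
    apply Summable.mul_left
    apply summable_sum (s := (Finset.univ : Finset (Fin n)))
    intro j _
    exact hsum j
  have htop : (∑' N, P (B N)) ≠ ⊤ := by
    apply ne_top_of_le_ne_top _ (ENNReal.tsum_le_tsum hBle)
    rw [← ENNReal.ofReal_tsum_of_nonneg (fun N => by positivity) hts]
    exact ENNReal.ofReal_ne_top
  filter_upwards [MeasureTheory.ae_eventually_notMem htop] with ω hω
  filter_upwards [hω] with N hN
  have habs : |gremX (A N) gremT ω - M N| < ε * M N := by
    by_contra hcon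
    exact hN (not_lt.mp hcon)
  obtain ⟨hlow, hup⟩ := abs_lt.mp habs
  have hXgt : (1 - ε) * M N < gremX (A N) gremT ω := by nlinarith [hMpos N]
  have hXlt : gremX (A N) gremT ω < (1 + ε) * M N := by nlinarith [hMpos N]
  have hemp : empMeasure
      (fun σ : (∀ i : Fin n, Fin (k i N) → Bool) =>
        fun j : Fin n => ξ N j (fun i _ => σ i) ω) (Set.univ.pi Δ)
      = ENNReal.ofReal (gremX (A N) gremT ω) := grem_emp (ξ N) Δ hΔm ω
  have hprod : ∏ i : Fin n, lam i N (Δ i) = ENNReal.ofReal (M N) := by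
    rw [hMdef]
    rw [ENNReal.ofReal_prod_of_nonneg (fun i _ => ENNReal.toReal_nonneg)]
    refine (Finset.prod_congr rfl fun i _ => ?_).symm
    exact ENNReal.ofReal_toReal (measure_ne_top _ _)
  constructor
  · rw [hemp, hprod]
    rcases le_or_gt 1 ε with h1ε | h1ε
    · have : ENNReal.ofReal (1 - ε) = 0 := by
        rw [ENNReal.ofReal_eq_zero]
        linarith
      rw [this, zero_mul]
      exact zero_le
    · rw [← ENNReal.ofReal_mul (by linarith)]
      exact ENNReal.ofReal_le_ofReal hXgt.le
  · rw [hemp, hprod, ← ENNReal.ofReal_mul (by linarith)]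
    exact ENNReal.ofReal_le_ofReal hXlt.le
end

section
/- (Section 5, Step 1) Let □ = ∏_{s∈S} Δ_s × ∏_{i=1}^n ∇_i be a box in ℝ^S × ℝⁿ with interval sides. If for some nonempty A ⊆ I one has ∑_{N≥n} 2^{k(A,N)} Q_{A,N} α_{A,N} < ∞, then almost surely there exists N₀ such that for all N ≥ N₀ one has μ_N(ω)(□) = 0. -/
open MeasureTheory ProbabilityTheory Filter
open scoped ENNReal NNReal Classical

/-- Nonempty finite sequences of distinct elements of `{1,…,n}` (of length `≤ n`),
encoded as embeddings `Fin (m+1) ↪ Fin n` for `0 ≤ m < n`. -/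
abbrev SeqS (n : ℕ) := Σ m : Fin n, (Fin (m.1 + 1) ↪ Fin n)

/-- `Q_{A,N} = ∏_{s ∈ S_A} λ_N^s(Δ_s)`, the product over the sequences with all entries
in `A`. -/
noncomputable def secQ {n : ℕ} (lam : SeqS n → ℕ → MeasureTheory.Measure ℝ)
    (Δ : SeqS n → Set ℝ) (A : Finset (Fin n)) (N : ℕ) : ℝ :=
  ∏ s ∈ Finset.univ.filter (fun s : SeqS n => ∀ j, s.2 j ∈ A), (lam s N (Δ s)).toReal

/-- `k(A,N) = ∑_{i ∈ A} k(i,N)`. -/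
def secK {n : ℕ} (k : Fin n → ℕ → ℕ) (A : Finset (Fin n)) (N : ℕ) : ℕ :=
  ∑ i ∈ A, k i N

/-- `α_{A,N} = 2^{-k(A,N)} ∑_{(σ_i : i ∈ A)} ∏_{i ∈ A} 1_{∇_i}(σ̄_i/N)`. -/
noncomputable def secAlpha {n : ℕ} (k : Fin n → ℕ → ℕ) (nab : Fin n → Set ℝ)
    (A : Finset (Fin n)) (N : ℕ) : ℝ :=
  ((2 : ℝ) ^ secK k A N)⁻¹ *
    ∑ τ : ((i : {x : Fin n // x ∈ A}) → Fin (k i.1 N) → Bool),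
      ∏ i : {x : Fin n // x ∈ A},
        (nab i.1).indicator 1
          ((∑ t : Fin (k i.1 N), if τ i t then (1 : ℝ) else -1) / N)

/-- **Section 5, Step 1.** If for some nonempty `A ⊆ I`,
`∑_N 2^{k(A,N)} Q_{A,N} α_{A,N} < ∞`, then almost surely, eventually in `N`, the
empirical measure of the box vanishes. -/
theorem sec5_step1
{Ω : Type*} [MeasurableSpace Ω] (P : Measure Ω) [IsProbabilityMeasure P]
    (n : ℕ) (hn : 1 ≤ n)
    (k : Fin n → ℕ → ℕ) (hk : ∀ N : ℕ, ∑ j : Fin n, k j N = N)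
    (lam : SeqS n → ℕ → Measure ℝ) (hlam : ∀ s N, IsProbabilityMeasure (lam s N))
    (ξ : (N : ℕ) → (s : SeqS n) →
      ((j : Fin (s.1.1 + 1)) → Fin (k (s.2 j) N) → Bool) → Ω → ℝ)
    (hmeas : ∀ N s c, Measurable (ξ N s c))
    (hindep : ∀ N : ℕ, iIndepFun
      (fun q : Σ s : SeqS n, ((j : Fin (s.1.1 + 1)) → Fin (k (s.2 j) N) → Bool) =>
        ξ N q.1 q.2) P)
    (hdist : ∀ N s c, P.map (ξ N s c) = lam s N)
    (Δ : SeqS n → Set ℝ) (hΔ : ∀ s, (Δ s).OrdConnected) (hΔm : ∀ s, MeasurableSet (Δ s))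
    (nab : Fin n → Set ℝ) (hnab : ∀ i, (nab i).OrdConnected)
    (hnabm : ∀ i, MeasurableSet (nab i))
    (hsum : ∃ A : Finset (Fin n), A.Nonempty ∧ Summable fun N : ℕ =>
      (2 : ℝ) ^ secK k A N * secQ lam Δ A N * secAlpha k nab A N) :
    ∀ᵐ ω ∂P, ∀ᶠ N in atTop,
      (empMeasure
        (fun σ : (∀ i : Fin n, Fin (k i N) → Bool) =>
          ((fun s : SeqS n => ξ N s (fun j => σ (s.2 j)) ω),
           (fun i : Fin n => (∑ t : Fin (k i N), if σ i t then (1 : ℝ) else -1) / N))))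
        ((Set.univ.pi Δ) ×ˢ (Set.univ.pi nab)) = 0 := by
  classical
  obtain ⟨A, -, hsum⟩ := hsum
  set b : ℕ → ℝ := fun N =>
    (2 : ℝ) ^ secK k A N * secQ lam Δ A N * secAlpha k nab A N with hbdef
  -- the bad events
  set E : ℕ → Set Ω := fun N => {ω | ∃ σ : (∀ i : Fin n, Fin (k i N) → Bool),
    (∀ s : SeqS n, ξ N s (fun j => σ (s.2 j)) ω ∈ Δ s) ∧
    (∀ i : Fin n, (∑ t : Fin (k i N), if σ i t then (1 : ℝ) else -1) / N ∈ nab i)} with hEdef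
  have hQnn : ∀ N, 0 ≤ secQ lam Δ A N := fun N =>
    Finset.prod_nonneg fun s _ => ENNReal.toReal_nonneg
  -- main bound : P (E N) ≤ ofReal (b N), and b N is a sum of nonneg terms
  have key : ∀ N : ℕ, P (E N) ≤ ENNReal.ofReal (b N) ∧ 0 ≤ b N := by
    intro N
    set SA : Finset (SeqS n) :=
      Finset.univ.filter (fun s : SeqS n => ∀ j, s.2 j ∈ A) with hSA
    let TA := (i : {x : Fin n // x ∈ A}) → Fin (k i.1 N) → Bool
    let c : TA → (s : SeqS n) → (j : Fin (s.1.1 + 1)) → Fin (k (s.2 j) N) → Bool :=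
      fun τ s j t => if h : s.2 j ∈ A then τ ⟨s.2 j, h⟩ t else false
    let ind : TA → ℝ := fun τ => ∏ i : {x : Fin n // x ∈ A},
      (nab i.1).indicator 1 ((∑ t : Fin (k i.1 N), if τ i t then (1 : ℝ) else -1) / N)
    have hindnn : ∀ τ, 0 ≤ ind τ := fun τ =>
      Finset.prod_nonneg fun i _ => Set.indicator_apply_nonneg (fun _ => zero_le_one)
    -- covering events
    let F : TA → Set Ω := fun τ => {ω |
      (∀ i : {x : Fin n // x ∈ A},
        (∑ t : Fin (k i.1 N), if τ i t then (1 : ℝ) else -1) / N ∈ nab i.1) ∧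
      ∀ s ∈ SA, ξ N s (c τ s) ω ∈ Δ s}
    have hEF : E N ⊆ ⋃ τ : TA, F τ := by
      rintro ω ⟨σ, h1, h2⟩
      refine Set.mem_iUnion.mpr ⟨fun i => σ i.1, fun i => h2 i.1, fun s hs => ?_⟩
      have hcs : c (fun i => σ i.1) s = fun j => σ (s.2 j) := by
        funext j t
        simp only [c]
        rw [dif_pos ((Finset.mem_filter.mp hs).2 j)]
      rw [hcs]; exact h1 s
    -- b N as a finite sum
    have h2 : ((2 : ℝ) ^ secK k A N) ≠ 0 := by positivity
    have hbN : b N = ∑ τ : TA, secQ lam Δ A N * ind τ := by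
      calc b N = (2 : ℝ) ^ secK k A N * secQ lam Δ A N *
            (((2 : ℝ) ^ secK k A N)⁻¹ * ∑ τ : TA, ind τ) := by simp only [hbdef, secAlpha]; rfl
        _ = secQ lam Δ A N * ∑ τ : TA, ind τ := by
            set S := ∑ τ : TA, ind τ
            field_simp
        _ = ∑ τ : TA, secQ lam Δ A N * ind τ := Finset.mul_sum _ _ _
    have hbnn : 0 ≤ b N := by
      rw [hbN]
      exact Finset.sum_nonneg fun τ _ => mul_nonneg (hQnn N) (hindnn τ)
    refine ⟨?_, hbnn⟩
    -- bound each covering event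
    have hF : ∀ τ : TA, P (F τ) ≤ ENNReal.ofReal (secQ lam Δ A N * ind τ) := by
      intro τ
      by_cases hD : ∀ i : {x : Fin n // x ∈ A},
          (∑ t : Fin (k i.1 N), if τ i t then (1 : ℝ) else -1) / N ∈ nab i.1
      · -- the deterministic condition holds, so `ind τ = 1`
        have hind1 : ind τ = 1 :=
          Finset.prod_eq_one fun i _ => by rw [Set.indicator_of_mem (hD i)]; rfl
        -- independence computation
        let f : SeqS n →
            (Σ s : SeqS n, ((j : Fin (s.1.1 + 1)) → Fin (k (s.2 j) N) → Bool)) :=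
          fun s => ⟨s, c τ s⟩
        have hfinj : ∀ a ∈ SA, ∀ b ∈ SA, f a = f b → a = b :=
          fun a _ b _ h => congrArg Sigma.fst h
        have hmeasint := (hindep N).meas_biInter (S := SA.image f)
          (s := fun q => ξ N q.1 q.2 ⁻¹' Δ q.1)
          (fun q _ => ⟨Δ q.1, hΔm q.1, rfl⟩)
        rw [Finset.set_biInter_finset_image, Finset.prod_image hfinj] at hmeasint
        have hval : ∀ s ∈ SA, P (ξ N s (c τ s) ⁻¹' Δ s) = lam s N (Δ s) := by
          intro s _
          rw [← hdist N s (c τ s), Measure.map_apply (hmeas N s (c τ s)) (hΔm s)]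
        have hprod : P (⋂ s ∈ SA, ξ N s (c τ s) ⁻¹' Δ s)
            = ∏ s ∈ SA, lam s N (Δ s) := by
          rw [hmeasint]; exact Finset.prod_congr rfl hval
        have hne : (∏ s ∈ SA, lam s N (Δ s)) ≠ ∞ := by
          refine (ENNReal.prod_lt_top fun s _ => ?_).ne
          have := hlam s N
          exact (measure_lt_top _ _)
        have hQ : ENNReal.ofReal (secQ lam Δ A N) = ∏ s ∈ SA, lam s N (Δ s) := by
          rw [secQ, ← ENNReal.toReal_prod, ENNReal.ofReal_toReal hne]
        have hsub : F τ ⊆ ⋂ s ∈ SA, ξ N s (c τ s) ⁻¹' Δ s := by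
          intro ω hω
          exact Set.mem_iInter₂.mpr fun s hs => hω.2 s hs
        calc P (F τ) ≤ P (⋂ s ∈ SA, ξ N s (c τ s) ⁻¹' Δ s) := measure_mono hsub
          _ = ENNReal.ofReal (secQ lam Δ A N) := by rw [hprod, hQ]
          _ = ENNReal.ofReal (secQ lam Δ A N * ind τ) := by rw [hind1, mul_one]
      · have hF0 : F τ = ∅ := by
          ext ω
          exact ⟨fun hω => (hD hω.1).elim, fun h => h.elim⟩
        rw [hF0, measure_empty]
        exact zero_le
    calc P (E N) ≤ P (⋃ τ : TA, F τ) := measure_mono hEF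
      _ ≤ ∑ τ : TA, P (F τ) := measure_iUnion_fintype_le _ _
      _ ≤ ∑ τ : TA, ENNReal.ofReal (secQ lam Δ A N * ind τ) :=
          Finset.sum_le_sum fun τ _ => hF τ
      _ = ENNReal.ofReal (∑ τ : TA, secQ lam Δ A N * ind τ) :=
          (ENNReal.ofReal_sum_of_nonneg fun τ _ =>
            mul_nonneg (hQnn N) (hindnn τ)).symm
      _ = ENNReal.ofReal (b N) := by rw [← hbN]
  -- Borel–Cantelli
  have hts : ∑' N, P (E N) ≠ ∞ := by
    refine ne_top_of_le_ne_top (b := ENNReal.ofReal (∑' N, b N)) ENNReal.ofReal_ne_top ?_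
    rw [ENNReal.ofReal_tsum_of_nonneg (fun N => (key N).2) hsum]
    exact ENNReal.tsum_le_tsum fun N => (key N).1
  have hlim : P (limsup E atTop) = 0 := measure_limsup_atTop_eq_zero hts
  have hae : ∀ᵐ ω ∂P, ω ∉ limsup E atTop := by
    rw [ae_iff]
    simpa using hlim
  filter_upwards [hae] with ω hω
  rw [mem_limsup_iff_frequently_mem, Filter.not_frequently] at hω
  filter_upwards [hω] with N hN
  -- the empirical measure vanishes
  have hBoxm : MeasurableSet ((Set.univ.pi Δ) ×ˢ (Set.univ.pi nab)) :=
    (MeasurableSet.univ_pi fun s => hΔm s).prod (MeasurableSet.univ_pi hnabm)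
  rw [empMeasure, Measure.smul_apply, Measure.finset_sum_apply]
  have hz : ∀ σ : (∀ i : Fin n, Fin (k i N) → Bool),
      Measure.dirac
        ((fun s : SeqS n => ξ N s (fun j => σ (s.2 j)) ω),
         (fun i : Fin n => (∑ t : Fin (k i N), if σ i t then (1 : ℝ) else -1) / N))
        ((Set.univ.pi Δ) ×ˢ (Set.univ.pi nab)) = 0 := by
    intro σ
    rw [Measure.dirac_apply' _ hBoxm]
    refine Set.indicator_of_notMem ?_ 1
    intro hmem
    rw [Set.mem_prod] at hmem
    obtain ⟨hm1, hm2⟩ := hmem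
    exact hN ⟨σ, fun s => hm1 s (Set.mem_univ s), fun i => hm2 i (Set.mem_univ i)⟩
  rw [Finset.sum_congr rfl fun σ _ => hz σ]
  simp
end

section
/- (Section 5, variance bound) Let □ = ∏_{s∈S} Δ_s × ∏_{i=1}^n ∇_i be a box in ℝ^S × ℝⁿ with interval sides. Then Var(μ_N(□)) ≤ ∑_{∅≠A⊆I} (Q_{I,N}² / Q_{A,N}) · 2^{-k(A,N)} · (α_{I,N}² / α_{A,N}), where the sum is over nonempty subsets A of I (terms with α_{A,N} = 0 or Q_{A,N} = 0 being interpreted as 0, since then the corresponding numerators also vanish). -/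
open MeasureTheory ProbabilityTheory Filter
open scoped ENNReal NNReal Classical

section Aux

variable {ι : Type*} [Fintype ι] {κ : ι → Type*} [∀ i, Fintype (κ i)]

omit [∀ i, Fintype (κ i)] in
lemma aux_if_prod [DecidableEq ι] (A : Finset ι) (σ σ' : ∀ i, κ i) (X : ℝ) :
    (if ∀ i ∈ A, σ i = σ' i then X else 0)
      = (∏ i, if i ∈ A then (if σ i = σ' i then (1:ℝ) else 0) else 1) * X := by
  by_cases hc : ∀ i ∈ A, σ i = σ' i
  · rw [if_pos hc, Finset.prod_eq_one, one_mul]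
    intro i _
    by_cases hi : i ∈ A
    · simp [hi, hc i hi]
    · simp [hi]
  · rw [if_neg hc]
    push_neg at hc
    obtain ⟨i, hiA, hne⟩ := hc
    rw [Finset.prod_eq_zero (Finset.mem_univ i), zero_mul]
    simp [hiA, hne]

lemma pair_sum_factor [DecidableEq ι] (h : ∀ i, κ i → ℝ) (A : Finset ι) :
    (∑ σ : ∀ i, κ i, ∑ σ' : ∀ i, κ i,
      if ∀ i ∈ A, σ i = σ' i then (∏ i, h i (σ i)) * ∏ i, h i (σ' i) else 0)
      = (∏ i ∈ A, ∑ x, h i x * h i x) * ∏ i ∈ Aᶜ, (∑ x, h i x) ^ 2 := by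
  have step1 : ∀ σ : ∀ i, κ i,
      (∑ σ' : ∀ i, κ i,
        if ∀ i ∈ A, σ i = σ' i then (∏ i, h i (σ i)) * ∏ i, h i (σ' i) else 0)
      = ∏ i, (if i ∈ A then h i (σ i) * h i (σ i) else h i (σ i) * ∑ x, h i x) := by
    intro σ
    have e1 : ∀ σ' : ∀ i, κ i,
        (if ∀ i ∈ A, σ i = σ' i then (∏ i, h i (σ i)) * ∏ i, h i (σ' i) else 0)
        = ∏ i, ((if i ∈ A then (if σ i = σ' i then (1:ℝ) else 0) else 1)
            * (h i (σ i) * h i (σ' i))) := by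
      intro σ'
      rw [aux_if_prod A σ σ']
      simp only [Finset.prod_mul_distrib]
    rw [Finset.sum_congr rfl fun σ' _ => e1 σ',
      ← Fintype.prod_sum (fun i b =>
        (if i ∈ A then if σ i = b then (1:ℝ) else 0 else 1) * (h i (σ i) * h i b))]
    refine Finset.prod_congr rfl fun i _ => ?_
    by_cases hi : i ∈ A
    · simp [hi, ite_mul, one_mul, zero_mul, Finset.sum_ite_eq]
    · simp [hi, Finset.mul_sum]
  rw [Finset.sum_congr rfl fun σ _ => step1 σ,
    ← Fintype.prod_sum (fun i a =>
      if i ∈ A then h i a * h i a else h i a * ∑ x, h i x)]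
  have e2 : ∀ i, (∑ x, (if i ∈ A then h i x * h i x else h i x * ∑ y, h i y))
      = (if i ∈ A then (∑ x, h i x * h i x) else (∑ x, h i x) ^ 2) := by
    intro i
    by_cases hi : i ∈ A
    · simp [hi]
    · simp [hi, ← Finset.sum_mul, sq]
  rw [Finset.prod_congr rfl fun i _ => e2 i, ← Finset.prod_mul_prod_compl A]
  exact congrArg₂ (· * ·) (Finset.prod_congr rfl fun i hi => if_pos hi)
    (Finset.prod_congr rfl fun i hi => if_neg (Finset.mem_compl.mp hi))

end Aux

set_option maxHeartbeats 2000000 in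
/-- **Section 5, variance bound.**
`Var(μ_N(□)) ≤ ∑_{∅ ≠ A ⊆ I} (Q_{I,N}²/Q_{A,N}) 2^{-k(A,N)} (α_{I,N}²/α_{A,N})`
(with `x/0 = 0`, which conforms with the convention that terms with vanishing
denominators, whose numerators also vanish, are interpreted as `0`). -/
theorem sec5_variance_bound
{Ω : Type*} [MeasurableSpace Ω] (P : Measure Ω) [IsProbabilityMeasure P]
    (n : ℕ) (hn : 1 ≤ n)
    (k : Fin n → ℕ → ℕ) (hk : ∀ N : ℕ, ∑ j : Fin n, k j N = N)
    (lam : SeqS n → ℕ → Measure ℝ) (hlam : ∀ s N, IsProbabilityMeasure (lam s N))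
    (ξ : (N : ℕ) → (s : SeqS n) →
      ((j : Fin (s.1.1 + 1)) → Fin (k (s.2 j) N) → Bool) → Ω → ℝ)
    (hmeas : ∀ N s c, Measurable (ξ N s c))
    (hindep : ∀ N : ℕ, iIndepFun
      (fun q : Σ s : SeqS n, ((j : Fin (s.1.1 + 1)) → Fin (k (s.2 j) N) → Bool) =>
        ξ N q.1 q.2) P)
    (hdist : ∀ N s c, P.map (ξ N s c) = lam s N)
    (Δ : SeqS n → Set ℝ) (hΔ : ∀ s, (Δ s).OrdConnected) (hΔm : ∀ s, MeasurableSet (Δ s))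
    (nab : Fin n → Set ℝ) (hnab : ∀ i, (nab i).OrdConnected)
    (hnabm : ∀ i, MeasurableSet (nab i))
    (N : ℕ) :
    variance (fun ω =>
      ((empMeasure
        (fun σ : (∀ i : Fin n, Fin (k i N) → Bool) =>
          ((fun s : SeqS n => ξ N s (fun j => σ (s.2 j)) ω),
           (fun i : Fin n => (∑ t : Fin (k i N), if σ i t then (1 : ℝ) else -1) / N))))
        ((Set.univ.pi Δ) ×ˢ (Set.univ.pi nab))).toReal) P ≤
      ∑ A ∈ Finset.univ.powerset.filter (fun A : Finset (Fin n) => A.Nonempty),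
        (secQ lam Δ Finset.univ N) ^ 2 / secQ lam Δ A N *
          ((2 : ℝ) ^ secK k A N)⁻¹ *
          ((secAlpha k nab Finset.univ N) ^ 2 / secAlpha k nab A N) := by
  classical
  -- basic abbreviations
  set box : Set ((SeqS n → ℝ) × (Fin n → ℝ)) := (Set.univ.pi Δ) ×ˢ (Set.univ.pi nab) with hbox_def
  have hbox : MeasurableSet box := (MeasurableSet.univ_pi hΔm).prod (MeasurableSet.univ_pi hnabm)
  set h : (i : Fin n) → (Fin (k i N) → Bool) → ℝ := fun i τ =>
    (nab i).indicator 1 ((∑ t, if τ t then (1:ℝ) else -1) / N) with hh_def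
  set S : Fin n → ℝ := fun i => ∑ τ, h i τ with hS_def
  set g : (∀ i : Fin n, Fin (k i N) → Bool) → ℝ := fun σ => ∏ i, h i (σ i) with hg_def
  set E : (∀ i : Fin n, Fin (k i N) → Bool) → Set Ω := fun σ =>
    ⋂ s : SeqS n, ξ N s (fun j => σ (s.2 j)) ⁻¹' Δ s with hE_def
  set Y : (∀ i : Fin n, Fin (k i N) → Bool) → Ω → ℝ :=
    fun σ => (E σ).indicator (fun _ => g σ) with hY_def
  set X : Ω → ℝ := fun ω => ((2:ℝ) ^ N)⁻¹ * ∑ σ, Y σ ω with hX_def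
  have hh01 : ∀ i τ, h i τ = 0 ∨ h i τ = 1 := by
    intro i τ
    by_cases hm : ((∑ t, if τ t then (1:ℝ) else -1) / N) ∈ nab i
    · right; simp [hh_def, Set.indicator_of_mem hm]
    · left; simp [hh_def, Set.indicator_of_notMem hm]
  have hhnn : ∀ i τ, 0 ≤ h i τ := by
    intro i τ; rcases hh01 i τ with h0 | h0 <;> simp [h0]
  have hhsq : ∀ i τ, h i τ * h i τ = h i τ := by
    intro i τ; rcases hh01 i τ with h0 | h0 <;> simp [h0]
  have hgnn : ∀ σ, 0 ≤ g σ := fun σ => Finset.prod_nonneg fun i _ => hhnn i (σ i)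
  have hEm : ∀ σ, MeasurableSet (E σ) :=
    fun σ => MeasurableSet.iInter fun s => (hmeas N s _) (hΔm s)
  have hSnn : ∀ i, 0 ≤ S i := fun i => Finset.sum_nonneg fun τ _ => hhnn i τ
  -- alpha in product form
  have halpha : ∀ A : Finset (Fin n),
      secAlpha k nab A N = ((2:ℝ) ^ secK k A N)⁻¹ * ∏ i ∈ A, S i := by
    intro A
    have hps : (∏ i : {x : Fin n // x ∈ A}, ∑ x : Fin (k i.1 N) → Bool,
          (nab i.1).indicator 1 ((∑ t : Fin (k i.1 N), if x t then (1:ℝ) else -1) / N))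
        = ∑ τ : ((i : {x : Fin n // x ∈ A}) → Fin (k i.1 N) → Bool),
            ∏ i : {x : Fin n // x ∈ A},
              (nab i.1).indicator 1 ((∑ t : Fin (k i.1 N), if τ i t then (1 : ℝ) else -1) / N) :=
      Fintype.prod_sum (R := ℝ) (fun (i : {x : Fin n // x ∈ A}) (x : Fin (k i.1 N) → Bool) =>
        (nab i.1).indicator 1 ((∑ t : Fin (k i.1 N), if x t then (1:ℝ) else -1) / N))
    rw [secAlpha, ← hps, ← Finset.prod_coe_sort A S]
  -- card of configurations
  have hcard : (Fintype.card (∀ i : Fin n, Fin (k i N) → Bool) : ℝ≥0∞) = 2 ^ N := by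
    have h1 : Fintype.card (∀ i : Fin n, Fin (k i N) → Bool) = 2 ^ N := by
      rw [Fintype.card_pi]
      have h2 : ∀ i : Fin n, Fintype.card (Fin (k i N) → Bool) = 2 ^ (k i N) := by
        intro i; rw [Fintype.card_fun]; simp
      rw [Finset.prod_congr rfl fun i _ => h2 i, Finset.prod_pow_eq_pow_sum, hk N]
    rw [h1]; push_cast; ring
  -- the variance argument is X
  have hXeq : (fun ω =>
      ((empMeasure
        (fun σ : (∀ i : Fin n, Fin (k i N) → Bool) =>
          ((fun s : SeqS n => ξ N s (fun j => σ (s.2 j)) ω),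
           (fun i : Fin n => (∑ t : Fin (k i N), if σ i t then (1 : ℝ) else -1) / N))))
        box).toReal) = X := by
    have hgval1 : ∀ σ : ∀ i : Fin n, Fin (k i N) → Bool,
        (∀ i, ((∑ t : Fin (k i N), if σ i t then (1:ℝ) else -1) / N) ∈ nab i) → g σ = 1 :=
      fun σ hc => Finset.prod_eq_one fun i _ => by
        simp [hh_def, Set.indicator_of_mem (hc i)]
    have hgval0 : ∀ σ : ∀ i : Fin n, Fin (k i N) → Bool,
        (¬ ∀ i, ((∑ t : Fin (k i N), if σ i t then (1:ℝ) else -1) / N) ∈ nab i) → g σ = 0 := by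
      intro σ hc
      push_neg at hc; obtain ⟨i, hi⟩ := hc
      exact Finset.prod_eq_zero (Finset.mem_univ i)
        (by simp [hh_def, Set.indicator_of_notMem hi])
    have hYnn : ∀ σ (ω : Ω), 0 ≤ Y σ ω :=
      fun σ ω => Set.indicator_nonneg (fun _ _ => hgnn σ) ω
    funext ω
    have hdir : ∀ σ : ∀ i : Fin n, Fin (k i N) → Bool,
        Measure.dirac ((fun s : SeqS n => ξ N s (fun j => σ (s.2 j)) ω),
          (fun i : Fin n => (∑ t : Fin (k i N), if σ i t then (1:ℝ) else -1) / N)) box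
        = ENNReal.ofReal (Y σ ω) := by
      intro σ
      rw [Measure.dirac_apply' _ hbox]
      have hmem : (((fun s : SeqS n => ξ N s (fun j => σ (s.2 j)) ω),
          (fun i : Fin n => (∑ t : Fin (k i N), if σ i t then (1:ℝ) else -1) / N)) ∈ box)
          ↔ (ω ∈ E σ ∧ ∀ i, ((∑ t : Fin (k i N), if σ i t then (1:ℝ) else -1) / N) ∈ nab i) := by
        simp [hbox_def, hE_def, Set.mem_iInter]
      by_cases h1 : ω ∈ E σ
      · by_cases h2 : ∀ i, ((∑ t : Fin (k i N), if σ i t then (1:ℝ) else -1) / N) ∈ nab i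
        · rw [Set.indicator_of_mem (hmem.mpr ⟨h1, h2⟩)]
          simp [hY_def, Set.indicator_of_mem h1, hgval1 σ h2]
        · rw [Set.indicator_of_notMem (fun hm => h2 (hmem.mp hm).2)]
          simp [hY_def, Set.indicator_of_mem h1, hgval0 σ h2]
      · rw [Set.indicator_of_notMem (fun hm => h1 (hmem.mp hm).1)]
        simp [hY_def, Set.indicator_of_notMem h1]
    rw [empMeasure, Measure.smul_apply, smul_eq_mul, hcard]
    rw [show ((∑ a : ∀ i : Fin n, Fin (k i N) → Bool, Measure.dirac
        ((fun s : SeqS n => ξ N s (fun j => a (s.2 j)) ω),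
         (fun i : Fin n => (∑ t : Fin (k i N), if a i t then (1:ℝ) else -1) / N))) box)
      = ∑ a : ∀ i : Fin n, Fin (k i N) → Bool, Measure.dirac
        ((fun s : SeqS n => ξ N s (fun j => a (s.2 j)) ω),
         (fun i : Fin n => (∑ t : Fin (k i N), if a i t then (1:ℝ) else -1) / N)) box
      from Measure.finset_sum_apply _ _ _]
    rw [Finset.sum_congr rfl fun σ _ => hdir σ]
    rw [← ENNReal.ofReal_sum_of_nonneg (fun σ _ => hYnn σ ω), ENNReal.toReal_mul,
      ENNReal.toReal_ofReal (Finset.sum_nonneg fun σ _ => hYnn σ ω)]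
    simp [hX_def, ENNReal.toReal_inv]
  -- probabilities
  set lamR : SeqS n → ℝ := fun s => (lam s N (Δ s)).toReal with hlamR_def
  set QI : ℝ := secQ lam Δ Finset.univ N with hQI_def
  set u : Finset (Fin n) → ℝ :=
    fun A => ∏ s ∈ Finset.univ.filter (fun s : SeqS n => ¬ ∀ j, s.2 j ∈ A), lamR s with hu_def
  have hQIeq : QI = ∏ s : SeqS n, lamR s := by
    rw [hQI_def, secQ, Finset.filter_true_of_mem (fun s _ => fun j => Finset.mem_univ _)]
  have hQsplit : ∀ A, secQ lam Δ A N * u A = QI := by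
    intro A
    rw [hQIeq, hu_def]
    exact Finset.prod_filter_mul_prod_filter_not Finset.univ _ _
  have hQnn : ∀ A, 0 ≤ secQ lam Δ A N :=
    fun A => Finset.prod_nonneg fun s _ => ENNReal.toReal_nonneg
  have hunn : ∀ A, 0 ≤ u A := fun A => Finset.prod_nonneg fun s _ => ENNReal.toReal_nonneg
  have hQInn : 0 ≤ QI := hQnn _
  have hbi : ∀ (T : Finset (Σ s : SeqS n, ((j : Fin (s.1.1 + 1)) → Fin (k (s.2 j) N) → Bool))),
      P (⋂ q ∈ T, ξ N q.1 q.2 ⁻¹' Δ q.1) = ∏ q ∈ T, lam q.1 N (Δ q.1) := by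
    intro T
    rw [(hindep N).meas_biInter (fun q _ => ⟨Δ q.1, hΔm q.1, rfl⟩)]
    exact Finset.prod_congr rfl fun q _ => by
      rw [← hdist N q.1 q.2, Measure.map_apply (hmeas N q.1 q.2) (hΔm q.1)]
  have hfinj : ∀ σ : ∀ i : Fin n, Fin (k i N) → Bool,
      Function.Injective (fun s : SeqS n =>
        (⟨s, fun j => σ (s.2 j)⟩ :
          Σ s : SeqS n, ((j : Fin (s.1.1 + 1)) → Fin (k (s.2 j) N) → Bool))) :=
    fun σ s s' hss' => congrArg Sigma.fst hss'
  have hfeq : ∀ (σ σ' : ∀ i : Fin n, Fin (k i N) → Bool) (s : SeqS n),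
      ((⟨s, fun j => σ (s.2 j)⟩ :
          Σ s : SeqS n, ((j : Fin (s.1.1 + 1)) → Fin (k (s.2 j) N) → Bool))
        = ⟨s, fun j => σ' (s.2 j)⟩)
        ↔ ∀ j, σ (s.2 j) = σ' (s.2 j) := by
    intro σ σ' s
    constructor
    · intro hq j
      exact congrFun (eq_of_heq (Sigma.mk.inj_iff.mp hq).2) j
    · intro hall
      exact congrArg (Sigma.mk s) (funext hall)
  have hPEnn : ∀ σ, P (E σ) = ∏ s : SeqS n, lam s N (Δ s) := by
    intro σ
    have hset : E σ = ⋂ q ∈ Finset.univ.image (fun s : SeqS n =>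
        (⟨s, fun j => σ (s.2 j)⟩ :
          Σ s : SeqS n, ((j : Fin (s.1.1 + 1)) → Fin (k (s.2 j) N) → Bool))),
        ξ N q.1 q.2 ⁻¹' Δ q.1 := by
      rw [hE_def]
      ext ω'
      simp only [Set.mem_iInter, Finset.mem_image, Finset.mem_univ, true_and,
        Set.mem_preimage]
      constructor
      · rintro hall q ⟨s, rfl⟩
        exact hall s
      · intro hall s
        exact hall _ ⟨s, rfl⟩
    rw [hset, hbi, Finset.prod_image (fun s _ s' _ hss' => hfinj σ hss')]
  have hPE : ∀ σ, (P (E σ)).toReal = QI := by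
    intro σ
    rw [hPEnn σ, ENNReal.toReal_prod, hQIeq]
  have hPEE : ∀ σ σ', (P (E σ ∩ E σ')).toReal
      = QI * u (Finset.univ.filter fun i => σ i = σ' i) := by
    intro σ σ'
    have hset : E σ ∩ E σ' = ⋂ q ∈ (Finset.univ.image (fun s : SeqS n =>
        (⟨s, fun j => σ (s.2 j)⟩ :
          Σ s : SeqS n, ((j : Fin (s.1.1 + 1)) → Fin (k (s.2 j) N) → Bool)))
        ∪ Finset.univ.image (fun s : SeqS n =>
        (⟨s, fun j => σ' (s.2 j)⟩ :
          Σ s : SeqS n, ((j : Fin (s.1.1 + 1)) → Fin (k (s.2 j) N) → Bool)))),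
        ξ N q.1 q.2 ⁻¹' Δ q.1 := by
      rw [hE_def]
      ext ω'
      simp only [Set.mem_inter_iff, Set.mem_iInter, Finset.mem_union, Finset.mem_image,
        Finset.mem_univ, true_and, Set.mem_preimage]
      constructor
      · rintro ⟨hall1, hall2⟩ q hq
        rcases hq with ⟨s, rfl⟩ | ⟨s, rfl⟩
        · exact hall1 s
        · exact hall2 s
      · intro hall
        exact ⟨fun s => hall _ (Or.inl ⟨s, rfl⟩), fun s => hall _ (Or.inr ⟨s, rfl⟩)⟩
    have hsd : Finset.univ.image (fun s : SeqS n =>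
        (⟨s, fun j => σ' (s.2 j)⟩ :
          Σ s : SeqS n, ((j : Fin (s.1.1 + 1)) → Fin (k (s.2 j) N) → Bool)))
        \ Finset.univ.image (fun s : SeqS n =>
        (⟨s, fun j => σ (s.2 j)⟩ :
          Σ s : SeqS n, ((j : Fin (s.1.1 + 1)) → Fin (k (s.2 j) N) → Bool)))
        = (Finset.univ.filter (fun s : SeqS n => ¬ ∀ j, σ (s.2 j) = σ' (s.2 j))).image
            (fun s : SeqS n =>
        (⟨s, fun j => σ' (s.2 j)⟩ :
          Σ s : SeqS n, ((j : Fin (s.1.1 + 1)) → Fin (k (s.2 j) N) → Bool))) := by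
      ext q
      simp only [Finset.mem_sdiff, Finset.mem_image, Finset.mem_filter, Finset.mem_univ,
        true_and]
      constructor
      · rintro ⟨⟨s, rfl⟩, hq⟩
        exact ⟨s, fun hall => hq ⟨s, (hfeq σ σ' s).mpr hall⟩, rfl⟩
      · rintro ⟨s, hcond, rfl⟩
        refine ⟨⟨s, rfl⟩, ?_⟩
        rintro ⟨u', hu'⟩
        have hus : u' = s := congrArg Sigma.fst hu'
        subst hus
        exact hcond ((hfeq σ σ' u').mp hu')
    have hPmul : P (E σ ∩ E σ') = (∏ s : SeqS n, lam s N (Δ s)) *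
        ∏ s ∈ Finset.univ.filter (fun s : SeqS n => ¬ ∀ j, σ (s.2 j) = σ' (s.2 j)),
          lam s N (Δ s) := by
      rw [hset, ← Finset.union_sdiff_self_eq_union, hbi,
        Finset.prod_union Finset.disjoint_sdiff, hsd,
        Finset.prod_image (fun s _ s' _ hss' => hfinj σ hss'),
        Finset.prod_image (fun s _ s' _ hss' => hfinj σ' hss')]
    rw [hPmul, ENNReal.toReal_mul, ENNReal.toReal_prod, ENNReal.toReal_prod]
    congr 1
    · rw [hQIeq]
    · rw [hu_def]
      refine Finset.prod_congr (Finset.filter_congr fun s _ => ?_) (fun s _ => rfl)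
      constructor
      · intro hnot hall
        exact hnot fun j => by simpa using hall j
      · intro hnot hall
        exact hnot fun j => by simpa using hall j
  -- integrals
  have hYmem : ∀ σ, MemLp (Y σ) 2 P :=
    fun σ => memLp_indicator_const 2 (hEm σ) (g σ) (Or.inr (measure_ne_top P _))
  have hXmem : MemLp X 2 P := by
    have hsum : MemLp (fun ω => ∑ σ, Y σ ω) 2 P :=
      memLp_finset_sum Finset.univ (fun σ _ => hYmem σ)
    exact hsum.const_mul _
  have hYint : ∀ σ, Integrable (Y σ) P :=
    fun σ => (hYmem σ).integrable (by norm_num)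
  have hIX : P[X] = ((2:ℝ)^N)⁻¹ * ((∑ σ, g σ) * QI) := by
    calc P[X] = ∫ ω, ((2:ℝ)^N)⁻¹ * ∑ σ, Y σ ω ∂P := rfl
      _ = ((2:ℝ)^N)⁻¹ * ∫ ω, ∑ σ, Y σ ω ∂P := integral_const_mul _ _
      _ = ((2:ℝ)^N)⁻¹ * ∑ σ, ∫ ω, Y σ ω ∂P := by
          rw [integral_finset_sum Finset.univ (fun σ _ => hYint σ)]
      _ = ((2:ℝ)^N)⁻¹ * ((∑ σ, g σ) * QI) := by
          rw [Finset.sum_mul]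
          congr 1
          refine Finset.sum_congr rfl fun σ _ => ?_
          rw [hY_def]
          rw [integral_indicator_const (g σ) (hEm σ), smul_eq_mul, measureReal_def, hPE σ, mul_comm]
  have hIX2 : P[X^2] = (((2:ℝ)^N)⁻¹)^2 *
      ∑ σ, ∑ σ', g σ * g σ' * (QI * u (Finset.univ.filter fun i => σ i = σ' i)) := by
    have hXsq : (X^2 : Ω → ℝ) = fun ω => (((2:ℝ)^N)⁻¹)^2 *
        ∑ σ, ∑ σ', (E σ ∩ E σ').indicator (fun _ => g σ * g σ') ω := by
      funext ω
      simp only [Pi.pow_apply, hX_def]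
      rw [mul_pow, sq (∑ σ, Y σ ω), Finset.sum_mul_sum]
      congr 1
      refine Finset.sum_congr rfl fun σ _ => Finset.sum_congr rfl fun σ' _ => ?_
      by_cases h1 : ω ∈ E σ <;> by_cases h2 : ω ∈ E σ' <;>
        simp [hY_def, Set.indicator_apply, h1, h2, Set.mem_inter_iff]
    have hint : ∀ (σ σ' : ∀ i : Fin n, Fin (k i N) → Bool),
        Integrable (fun ω => (E σ ∩ E σ').indicator (fun _ => g σ * g σ') ω) P :=
      fun σ σ' => (memLp_indicator_const 1 ((hEm σ).inter (hEm σ'))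
        (g σ * g σ') (Or.inr (measure_ne_top P _))).integrable le_rfl
    calc P[X^2] = ∫ ω, (((2:ℝ)^N)⁻¹)^2 *
          ∑ σ, ∑ σ', (E σ ∩ E σ').indicator (fun _ => g σ * g σ') ω ∂P := by rw [hXsq]
      _ = (((2:ℝ)^N)⁻¹)^2 * ∫ ω, ∑ σ, ∑ σ',
            (E σ ∩ E σ').indicator (fun _ => g σ * g σ') ω ∂P := integral_const_mul _ _
      _ = (((2:ℝ)^N)⁻¹)^2 * ∑ σ, ∑ σ', ∫ ω,
            (E σ ∩ E σ').indicator (fun _ => g σ * g σ') ω ∂P := by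
          rw [integral_finset_sum Finset.univ
            (fun σ _ => integrable_finset_sum Finset.univ (fun σ' _ => hint σ σ'))]
          congr 1
          exact Finset.sum_congr rfl fun σ _ =>
            integral_finset_sum Finset.univ (fun σ' _ => hint σ σ')
      _ = _ := by
          congr 1
          refine Finset.sum_congr rfl fun σ _ => Finset.sum_congr rfl fun σ' _ => ?_
          rw [integral_indicator_const (g σ * g σ') ((hEm σ).inter (hEm σ')), smul_eq_mul,
            measureReal_def, hPEE σ σ', mul_comm]
  -- variance as a sum over pairs
  set Afun : ((∀ i : Fin n, Fin (k i N) → Bool) × (∀ i : Fin n, Fin (k i N) → Bool))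
      → Finset (Fin n) := fun p => Finset.univ.filter fun i => p.1 i = p.2 i with hAfun_def
  set F : ((∀ i : Fin n, Fin (k i N) → Bool) × (∀ i : Fin n, Fin (k i N) → Bool)) → ℝ :=
    fun p => (((2:ℝ)^N)⁻¹)^2 * (g p.1 * g p.2 * (QI * u (Afun p) - QI^2)) with hF_def
  have hVar : variance X P = ∑ p, F p := by
    rw [variance_eq_sub hXmem, hIX, hIX2, Fintype.sum_prod_type]
    have expand : ∀ σ σ' : ∀ i : Fin n, Fin (k i N) → Bool, F (σ, σ')
        = (((2:ℝ)^N)⁻¹)^2 * (g σ * g σ' * (QI * u (Finset.univ.filter fun i => σ i = σ' i)))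
          - g σ * g σ' * ((((2:ℝ)^N)⁻¹)^2 * QI^2) := by
      intro σ σ'
      simp only [hF_def, hAfun_def]
      ring
    rw [Finset.sum_congr rfl fun σ (_ : σ ∈ Finset.univ) =>
      Finset.sum_congr rfl fun σ' (_ : σ' ∈ Finset.univ) => expand σ σ']
    rw [Finset.sum_congr rfl fun σ (_ : σ ∈ (Finset.univ : Finset (∀ i : Fin n, Fin (k i N) → Bool))) =>
      (Finset.sum_sub_distrib (s := Finset.univ) _ _)]
    rw [Finset.sum_sub_distrib]
    congr 1
    · rw [Finset.mul_sum]
      exact Finset.sum_congr rfl fun σ _ => by rw [Finset.mul_sum]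
    · rw [mul_pow, mul_pow, sq (∑ σ : ∀ i : Fin n, Fin (k i N) → Bool, g σ),
        Finset.sum_mul_sum]
      rw [mul_left_comm, Finset.sum_mul]
      refine Finset.sum_congr rfl fun σ _ => ?_
      rw [Finset.sum_mul]
  -- per-fiber bound
  have key : ∀ A : Finset (Fin n), A.Nonempty →
      (∑ p ∈ Finset.univ.filter (fun p => Afun p = A), F p)
        ≤ QI ^ 2 / secQ lam Δ A N * ((2:ℝ) ^ secK k A N)⁻¹ *
          ((secAlpha k nab Finset.univ N) ^ 2 / secAlpha k nab A N) := by
    intro A hA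
    have h1nn : ∀ p : (∀ i : Fin n, Fin (k i N) → Bool) × (∀ i : Fin n, Fin (k i N) → Bool),
        0 ≤ g p.1 * g p.2 := fun p => mul_nonneg (hgnn _) (hgnn _)
    have hc2 : (0:ℝ) ≤ (((2:ℝ)^N)⁻¹)^2 := sq_nonneg _
    have hstep1 : (∑ p ∈ Finset.univ.filter (fun p => Afun p = A), F p)
        ≤ ∑ p ∈ Finset.univ.filter (fun p => A ⊆ Afun p),
            (((2:ℝ)^N)⁻¹)^2 * (QI * u A) * (g p.1 * g p.2) := by
      refine le_trans (Finset.sum_le_sum fun p hp => ?_)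
        (Finset.sum_le_sum_of_subset_of_nonneg
          (Finset.monotone_filter_right _ fun p _ hAp => by
            rw [← hAp])
          (fun p _ _ => mul_nonneg (mul_nonneg hc2 (mul_nonneg hQInn (hunn A))) (h1nn p)))
      have hAp : Afun p = A := (Finset.mem_filter.mp hp).2
      simp only [hF_def]
      rw [hAp]
      nlinarith [mul_nonneg (mul_nonneg hc2 (h1nn p)) (sq_nonneg QI)]
    have hcond : ∀ σ σ' : ∀ i : Fin n, Fin (k i N) → Bool,
        (A ⊆ Afun (σ, σ')) ↔ ∀ i ∈ A, σ i = σ' i := by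
      intro σ σ'
      simp [hAfun_def, Finset.subset_iff]
    have hsum_filter : (∑ p ∈ Finset.univ.filter (fun p => A ⊆ Afun p), g p.1 * g p.2)
        = (∏ i ∈ A, S i) * ∏ i ∈ Aᶜ, S i ^ 2 := by
      rw [Finset.sum_filter, Fintype.sum_prod_type]
      calc (∑ σ : ∀ i : Fin n, Fin (k i N) → Bool, ∑ σ' : ∀ i : Fin n, Fin (k i N) → Bool,
            if A ⊆ Afun (σ, σ') then g σ * g σ' else 0)
          = ∑ σ : ∀ i : Fin n, Fin (k i N) → Bool, ∑ σ' : ∀ i : Fin n, Fin (k i N) → Bool,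
            if ∀ i ∈ A, σ i = σ' i then (∏ i, h i (σ i)) * ∏ i, h i (σ' i) else 0 := by
            refine Finset.sum_congr rfl fun σ _ => Finset.sum_congr rfl fun σ' _ => ?_
            exact if_congr (hcond σ σ') rfl rfl
          _ = (∏ i ∈ A, ∑ x, h i x * h i x) * ∏ i ∈ Aᶜ, (∑ x, h i x) ^ 2 := by
            have hps := pair_sum_factor h A
            convert hps using 4 <;> exact Subsingleton.elim _ _
          _ = (∏ i ∈ A, S i) * ∏ i ∈ Aᶜ, S i ^ 2 := by
            congr 1
            exact Finset.prod_congr rfl fun i _ => by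
              rw [Finset.sum_congr rfl fun τ _ => hhsq i τ]
    have hstep2 : (∑ p ∈ Finset.univ.filter (fun p => A ⊆ Afun p),
        (((2:ℝ)^N)⁻¹)^2 * (QI * u A) * (g p.1 * g p.2))
        = (((2:ℝ)^N)⁻¹)^2 * (QI * u A) * ((∏ i ∈ A, S i) * ∏ i ∈ Aᶜ, S i ^ 2) := by
      rw [← Finset.mul_sum, hsum_filter]
    refine le_trans (le_trans hstep1 (le_of_eq hstep2)) ?_
    have hKsplit : secK k A N + secK k Aᶜ N = N := by
      rw [secK, secK, Finset.sum_add_sum_compl]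
      exact hk N
    by_cases hQA : secQ lam Δ A N = 0
    · have hQI0 : QI = 0 := by rw [← hQsplit A, hQA, zero_mul]
      rw [hQI0, hQA]
      simp
    · by_cases hPA : (∏ i ∈ A, S i) = 0
      · rw [halpha A, hPA, mul_zero, div_zero, mul_zero]
        simp
      · have hQIeq2 : QI = secQ lam Δ A N * u A := (hQsplit A).symm
        have h2A : ((2:ℝ) ^ secK k A N) ≠ 0 := by positivity
        have h2C : ((2:ℝ) ^ secK k Aᶜ N) ≠ 0 := by positivity
        have h2N : ((2:ℝ) ^ N) = 2 ^ secK k A N * 2 ^ secK k Aᶜ N := by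
          rw [← pow_add, hKsplit]
        have hprodsplit : (∏ i, S i) = (∏ i ∈ A, S i) * ∏ i ∈ Aᶜ, S i :=
          (Finset.prod_mul_prod_compl A S).symm
        have hKU : secK k Finset.univ N = N := hk N
        rw [halpha A, halpha Finset.univ, hKU, hQIeq2, h2N, hprodsplit, Finset.prod_pow]
        apply le_of_eq
        field_simp
  -- empty fiber vanishes
  have hempty : (∑ p ∈ Finset.univ.filter (fun p => Afun p = (∅ : Finset (Fin n))), F p) = 0 := by
    refine Finset.sum_eq_zero fun p hp => ?_
    have hp' : Afun p = (∅ : Finset (Fin n)) := (Finset.mem_filter.mp hp).2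
    have hu0 : u (∅ : Finset (Fin n)) = QI := by
      rw [hu_def, hQIeq]
      dsimp only
      rw [Finset.filter_true_of_mem]
      intro s _ hall
      exact absurd (hall 0) (by simp)
    have hz : QI * QI - QI^2 = 0 := by ring
    simp only [hF_def, hp', hu0, hz, mul_zero, zero_mul]
  -- assemble
  rw [hXeq, hVar]
  rw [← Finset.sum_fiberwise Finset.univ Afun F]
  rw [← Finset.sum_filter_add_sum_filter_not Finset.univ (fun A : Finset (Fin n) => A.Nonempty)]
  have hzero : (∑ A ∈ Finset.univ.filter (fun A : Finset (Fin n) => ¬ A.Nonempty),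
      ∑ p ∈ Finset.univ.filter (fun p => Afun p = A), F p) = 0 := by
    refine Finset.sum_eq_zero fun A hA => ?_
    have : A = (∅ : Finset (Fin n)) :=
      Finset.not_nonempty_iff_eq_empty.mp (Finset.mem_filter.mp hA).2
    rw [this]; exact hempty
  rw [hzero, add_zero, Finset.powerset_univ]
  exact Finset.sum_le_sum fun A hA => key A (Finset.mem_filter.mp hA).2
end

section
/- (Section 5, Step 2) Let □ = ∏_{s∈S} Δ_s × ∏_{i=1}^n ∇_i be a box in ℝ^S × ℝⁿ with interval sides, and suppose Q_{A,N} α_{A,N} > 0 for all nonempty A ⊆ I and all N. If for every nonempty A ⊆ I one has ∑_{N≥n} 1/(2^{k(A,N)} Q_{A,N} α_{A,N}) < ∞, then for every ε > 0, almost surely there exists N₀ such that for all N ≥ N₀ one has (1−ε) Q_{I,N} α_{I,N} ≤ μ_N(ω)(□) ≤ (1+ε) Q_{I,N} α_{I,N}. -/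
open MeasureTheory ProbabilityTheory Filter
open scoped ENNReal NNReal Classical

/-! ### Auxiliary definitions -/

noncomputable def secChi {n : ℕ} (k : Fin n → ℕ → ℕ) (nab : Fin n → Set ℝ) (N : ℕ)
    (i : Fin n) (τ : Fin (k i N) → Bool) : ℝ :=
  (nab i).indicator 1 ((∑ t : Fin (k i N), if τ t then (1 : ℝ) else -1) / N)

noncomputable def secT {n : ℕ} (k : Fin n → ℕ → ℕ) (nab : Fin n → Set ℝ) (N : ℕ)
    (i : Fin n) : ℝ :=
  ∑ τ : Fin (k i N) → Bool, secChi k nab N i τ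

noncomputable def secC {n : ℕ} (k : Fin n → ℕ → ℕ) (nab : Fin n → Set ℝ) (N : ℕ)
    (σ : ∀ i : Fin n, Fin (k i N) → Bool) : ℝ :=
  ∏ i, secChi k nab N i (σ i)

def secEv {Ω : Type*} {n : ℕ} {k : Fin n → ℕ → ℕ}
    (ξ : (N : ℕ) → (s : SeqS n) →
      ((j : Fin (s.1.1 + 1)) → Fin (k (s.2 j) N) → Bool) → Ω → ℝ)
    (Δ : SeqS n → Set ℝ) (N : ℕ) (σ : ∀ i : Fin n, Fin (k i N) → Bool) : Set Ω :=
  ⋂ s : SeqS n, (ξ N s (fun j => σ (s.2 j))) ⁻¹' (Δ s)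

noncomputable def secX {Ω : Type*} {n : ℕ} {k : Fin n → ℕ → ℕ}
    (ξ : (N : ℕ) → (s : SeqS n) →
      ((j : Fin (s.1.1 + 1)) → Fin (k (s.2 j) N) → Bool) → Ω → ℝ)
    (Δ : SeqS n → Set ℝ) (nab : Fin n → Set ℝ) (N : ℕ) (ω : Ω) : ℝ :=
  ((2 : ℝ) ^ N)⁻¹ * ∑ σ : ∀ i : Fin n, Fin (k i N) → Bool,
    secC k nab N σ * (secEv ξ Δ N σ).indicator 1 ω

/-! ### Elementary facts -/

lemma secChi_nonneg {n : ℕ} {k : Fin n → ℕ → ℕ} {nab : Fin n → Set ℝ} {N : ℕ}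
    (i : Fin n) (τ : Fin (k i N) → Bool) : 0 ≤ secChi k nab N i τ := by
  unfold secChi; unfold Set.indicator; split <;> simp

lemma secChi_idem {n : ℕ} {k : Fin n → ℕ → ℕ} {nab : Fin n → Set ℝ} {N : ℕ}
    (i : Fin n) (τ : Fin (k i N) → Bool) :
    secChi k nab N i τ * secChi k nab N i τ = secChi k nab N i τ := by
  unfold secChi; unfold Set.indicator; split <;> simp

lemma secT_nonneg {n : ℕ} {k : Fin n → ℕ → ℕ} {nab : Fin n → Set ℝ} {N : ℕ}
    (i : Fin n) : 0 ≤ secT k nab N i :=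
  Finset.sum_nonneg fun τ _ => secChi_nonneg i τ

lemma secC_nonneg {n : ℕ} {k : Fin n → ℕ → ℕ} {nab : Fin n → Set ℝ} {N : ℕ}
    (σ : ∀ i : Fin n, Fin (k i N) → Bool) : 0 ≤ secC k nab N σ :=
  Finset.prod_nonneg fun i _ => secChi_nonneg i (σ i)

lemma sum_pi_prod {ι : Type*} [Fintype ι] [DecidableEq ι] {κ : ι → Type*} [∀ i, Fintype (κ i)]
    (f : ∀ i, κ i → ℝ) :
    ∑ x : ∀ i, κ i, ∏ i, f i (x i) = ∏ i, ∑ j : κ i, f i j := by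
  have h := Finset.prod_univ_sum (fun i => (Finset.univ : Finset (κ i))) f
  simpa only [Fintype.piFinset_univ] using h.symm

lemma secAlpha_eq {n : ℕ} (k : Fin n → ℕ → ℕ) (nab : Fin n → Set ℝ)
    (A : Finset (Fin n)) (N : ℕ) :
    secAlpha k nab A N = ((2 : ℝ) ^ secK k A N)⁻¹ * ∏ i ∈ A, secT k nab N i := by
  unfold secAlpha
  congr 1
  rw [← Finset.prod_coe_sort A (fun i => secT k nab N i)]
  have h := sum_pi_prod (fun (i : {x : Fin n // x ∈ A}) (τ : Fin (k i.1 N) → Bool) =>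
    secChi k nab N i.1 τ)
  exact h

lemma secQ_nonneg {n : ℕ} (lam : SeqS n → ℕ → Measure ℝ) (Δ : SeqS n → Set ℝ)
    (A : Finset (Fin n)) (N : ℕ) : 0 ≤ secQ lam Δ A N :=
  Finset.prod_nonneg fun s _ => ENNReal.toReal_nonneg

lemma secAlpha_nonneg {n : ℕ} (k : Fin n → ℕ → ℕ) (nab : Fin n → Set ℝ)
    (A : Finset (Fin n)) (N : ℕ) : 0 ≤ secAlpha k nab A N := by
  rw [secAlpha_eq]
  exact mul_nonneg (by positivity) (Finset.prod_nonneg fun i _ => secT_nonneg i)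

lemma secQ_empty {n : ℕ} (lam : SeqS n → ℕ → Measure ℝ) (Δ : SeqS n → Set ℝ) (N : ℕ) :
    secQ lam Δ (∅ : Finset (Fin n)) N = 1 := by
  unfold secQ
  rw [Finset.filter_false_of_mem, Finset.prod_empty]
  intro s _ h
  exact absurd (h 0) (Finset.notMem_empty _)

lemma secAlpha_empty {n : ℕ} (k : Fin n → ℕ → ℕ) (nab : Fin n → Set ℝ) (N : ℕ) :
    secAlpha k nab (∅ : Finset (Fin n)) N = 1 := by
  rw [secAlpha_eq]
  simp [secK]

lemma card_conf {n : ℕ} (k : Fin n → ℕ → ℕ) (N : ℕ) (hkN : ∑ j : Fin n, k j N = N) :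
    (Fintype.card (∀ i : Fin n, Fin (k i N) → Bool)) = 2 ^ N := by
  rw [Fintype.card_pi]
  simp only [Fintype.card_fun, Fintype.card_fin, Fintype.card_bool]
  rw [Finset.prod_pow_eq_pow_sum, hkN]

/-! ### the agreement sum identity -/

lemma agree_sum {n : ℕ} {κ : Fin n → Type*} [∀ i, Fintype (κ i)] [∀ i, DecidableEq (κ i)]
    (χ : ∀ i, κ i → ℝ) (hχ : ∀ i a, χ i a * χ i a = χ i a)
    (B : Finset (Fin n)) :
    (∑ σ : ∀ i, κ i, ∑ σ' : ∀ i, κ i,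
      (if (∀ i ∈ B, σ i = σ' i) then (∏ i, χ i (σ i)) * (∏ i, χ i (σ' i)) else 0))
    = (∏ i, ∑ a : κ i, χ i a) * ∏ i ∈ Bᶜ, ∑ a : κ i, χ i a := by
  have key : ∀ (σ σ' : ∀ i, κ i),
      (if (∀ i ∈ B, σ i = σ' i) then (∏ i, χ i (σ i)) * (∏ i, χ i (σ' i)) else 0)
      = ∏ i, (χ i (σ i) * χ i (σ' i) * (if i ∈ B then (if σ i = σ' i then (1:ℝ) else 0) else 1)) := by
    intro σ σ'
    rw [Finset.prod_mul_distrib, Finset.prod_mul_distrib]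
    have : (∏ i, (if i ∈ B then (if σ i = σ' i then (1:ℝ) else 0) else 1))
        = if (∀ i ∈ B, σ i = σ' i) then (1:ℝ) else 0 := by
      rw [Finset.prod_ite_mem Finset.univ B (fun i => if σ i = σ' i then (1:ℝ) else 0),
        Finset.univ_inter, Finset.prod_boole]
      simp
    rw [this]
    split_ifs <;> ring
  simp only [key]
  have step1 : ∀ σ : ∀ i, κ i,
      (∑ σ' : ∀ i, κ i, ∏ i, (χ i (σ i) * χ i (σ' i) *
        (if i ∈ B then (if σ i = σ' i then (1:ℝ) else 0) else 1)))
      = ∏ i, ∑ b : κ i, (χ i (σ i) * χ i b * (if i ∈ B then (if σ i = b then (1:ℝ) else 0) else 1)) := by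
    intro σ
    exact sum_pi_prod (fun i b => χ i (σ i) * χ i b * (if i ∈ B then (if σ i = b then (1:ℝ) else 0) else 1))
  rw [Finset.sum_congr rfl (fun σ _ => step1 σ),
    sum_pi_prod (fun i a => ∑ b : κ i, χ i a * χ i b *
      if i ∈ B then (if a = b then (1:ℝ) else 0) else 1)]
  have step2 : ∀ i, (∑ a : κ i, ∑ b : κ i,
      (χ i a * χ i b * (if i ∈ B then (if a = b then (1:ℝ) else 0) else 1)))
      = if i ∈ B then (∑ a : κ i, χ i a) else (∑ a : κ i, χ i a) * (∑ a : κ i, χ i a) := by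
    intro i
    by_cases hi : i ∈ B
    · simp only [hi, if_true]
      have h1 : ∀ a : κ i, (∑ b : κ i, χ i a * χ i b * if a = b then (1:ℝ) else 0) = χ i a := by
        intro a
        rw [Finset.sum_eq_single a (fun b _ hb => by simp [Ne.symm hb]) (by simp)]
        rw [if_pos rfl, mul_one, hχ]
      exact Finset.sum_congr rfl (fun a _ => h1 a)
    · simp only [hi, if_false, mul_one]
      rw [← Finset.sum_mul_sum]
  rw [Finset.prod_congr rfl (fun i _ => step2 i)]
  have step3 : ∀ i, (if i ∈ B then (∑ a : κ i, χ i a) else (∑ a : κ i, χ i a) * (∑ a : κ i, χ i a))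
      = (∑ a : κ i, χ i a) * (if i ∈ Bᶜ then (∑ a : κ i, χ i a) else 1) := by
    intro i
    by_cases hi : i ∈ B <;> simp [hi]
  rw [Finset.prod_congr rfl (fun i _ => step3 i), Finset.prod_mul_distrib,
    Finset.prod_ite_mem Finset.univ Bᶜ, Finset.univ_inter]

/-! ### Claim A : the empirical measure of the box -/

lemma claimA {Ω : Type*} [MeasurableSpace Ω] {n : ℕ} {k : Fin n → ℕ → ℕ}
    (ξ : (N : ℕ) → (s : SeqS n) →
      ((j : Fin (s.1.1 + 1)) → Fin (k (s.2 j) N) → Bool) → Ω → ℝ)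
    (Δ : SeqS n → Set ℝ) (hΔm : ∀ s, MeasurableSet (Δ s))
    (nab : Fin n → Set ℝ) (hnabm : ∀ i, MeasurableSet (nab i))
    (N : ℕ) (hkN : ∑ j : Fin n, k j N = N) (ω : Ω) :
    ((empMeasure
        (fun σ : (∀ i : Fin n, Fin (k i N) → Bool) =>
          ((fun s : SeqS n => ξ N s (fun j => σ (s.2 j)) ω),
           (fun i : Fin n => (∑ t : Fin (k i N), if σ i t then (1 : ℝ) else -1) / N))))
          ((Set.univ.pi Δ) ×ˢ (Set.univ.pi nab))).toReal
      = secX ξ Δ nab N ω := by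
  have hbox : MeasurableSet ((Set.univ.pi Δ) ×ˢ (Set.univ.pi nab)) :=
    (MeasurableSet.univ_pi fun s => hΔm s).prod (MeasurableSet.univ_pi hnabm)
  unfold empMeasure
  rw [Measure.smul_apply, Measure.finset_sum_apply]
  simp only [Measure.dirac_apply' _ hbox]
  rw [smul_eq_mul, ENNReal.toReal_mul, ENNReal.toReal_inv,
    ENNReal.toReal_sum (fun a _ => by
      simp [Set.indicator_apply]; split <;> simp)]
  have hcard : ((Fintype.card (∀ i : Fin n, Fin (k i N) → Bool) : ℝ≥0∞)).toReal
      = (2 : ℝ) ^ N := by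
    rw [card_conf k N hkN]; simp
  rw [hcard]
  unfold secX
  congr 1
  refine Finset.sum_congr rfl fun σ _ => ?_
  rw [Set.indicator_apply, Set.indicator_apply]
  have hmem : ((fun s : SeqS n => ξ N s (fun j => σ (s.2 j)) ω),
        (fun i : Fin n => (∑ t : Fin (k i N), if σ i t then (1 : ℝ) else -1) / N))
        ∈ ((Set.univ.pi Δ) ×ˢ (Set.univ.pi nab))
      ↔ (ω ∈ secEv ξ Δ N σ ∧ ∀ i, ((∑ t : Fin (k i N), if σ i t then (1 : ℝ) else -1) / N) ∈ nab i) := by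
    simp [secEv, Set.mem_pi]
  rw [if_congr hmem rfl rfl]
  have hC : secC k nab N σ
      = if (∀ i, ((∑ t : Fin (k i N), if σ i t then (1 : ℝ) else -1) / N) ∈ nab i)
        then (1:ℝ) else 0 := by
    unfold secC secChi
    simp only [Set.indicator_apply, Pi.one_apply]
    rw [Finset.prod_boole]
    simp
  rw [hC]
  by_cases h1 : ω ∈ secEv ξ Δ N σ <;>
    by_cases h2 : (∀ i, ((∑ t : Fin (k i N), if σ i t then (1 : ℝ) else -1) / N) ∈ nab i) <;>
    simp [h1, h2]

/-! ### Claim B : probability of joint events via independence -/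

lemma claimB {Ω : Type*} [MeasurableSpace Ω] (P : Measure Ω) {n : ℕ} {k : Fin n → ℕ → ℕ}
    (lam : SeqS n → ℕ → Measure ℝ)
    (ξ : (N : ℕ) → (s : SeqS n) →
      ((j : Fin (s.1.1 + 1)) → Fin (k (s.2 j) N) → Bool) → Ω → ℝ)
    (hmeas : ∀ N s c, Measurable (ξ N s c))
    (Δ : SeqS n → Set ℝ) (hΔm : ∀ s, MeasurableSet (Δ s)) (N : ℕ)
    (hindep : iIndepFun
      (fun q : Σ s : SeqS n, ((j : Fin (s.1.1 + 1)) → Fin (k (s.2 j) N) → Bool) =>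
        ξ N q.1 q.2) P)
    (hdist : ∀ s c, P.map (ξ N s c) = lam s N)
    (σ σ' : ∀ i : Fin n, Fin (k i N) → Bool) :
    P (secEv ξ Δ N σ ∩ secEv ξ Δ N σ')
      = (∏ s : SeqS n, lam s N (Δ s)) *
        ∏ s ∈ Finset.univ.filter
          (fun s : SeqS n => ¬ ∀ j, σ (s.2 j) = σ' (s.2 j)), lam s N (Δ s) := by
  set QIdx := (Σ s : SeqS n, ((j : Fin (s.1.1 + 1)) → Fin (k (s.2 j) N) → Bool)) with hQIdx
  set io : (∀ i : Fin n, Fin (k i N) → Bool) → SeqS n → QIdx :=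
    fun τ s => ⟨s, fun j => τ (s.2 j)⟩ with hio
  have hioinj : ∀ τ, Function.Injective (io τ) := by
    intro τ s t h
    exact congrArg Sigma.fst h
  set G : Finset QIdx := (Finset.univ.image (io σ)) ∪ (Finset.univ.image (io σ')) with hG
  have h1 : (⋂ q ∈ G, (fun ω => ξ N q.1 q.2 ω) ⁻¹' Δ q.1) = secEv ξ Δ N σ ∩ secEv ξ Δ N σ' := by
    ext ω
    simp only [Set.mem_iInter, Set.mem_inter_iff, secEv, Set.mem_preimage, hG,
      Finset.mem_union, Finset.mem_image, Finset.mem_univ, true_and]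
    constructor
    · intro h
      exact ⟨fun s => h (io σ s) (Or.inl ⟨s, rfl⟩), fun s => h (io σ' s) (Or.inr ⟨s, rfl⟩)⟩
    · rintro ⟨h, h'⟩ q (⟨s, rfl⟩ | ⟨s, rfl⟩)
      · exact h s
      · exact h' s
  have h2 := hindep.measure_inter_preimage_eq_mul G (sets := fun q => Δ q.1)
    (fun q _ => hΔm q.1)
  rw [← h1, h2]
  have h3 : ∀ q : QIdx, P ((fun ω => ξ N q.1 q.2 ω) ⁻¹' Δ q.1) = lam q.1 N (Δ q.1) := by
    intro q
    rw [show (fun ω => ξ N q.1 q.2 ω) = ξ N q.1 q.2 from rfl,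
      ← Measure.map_apply (hmeas N q.1 q.2) (hΔm q.1), hdist]
  simp only [h3]
  have hsplit : G = (Finset.univ.image (io σ)) ∪
      ((Finset.univ.image (io σ')) \ (Finset.univ.image (io σ))) := by
    rw [Finset.union_sdiff_self_eq_union]
  have hdiff : (Finset.univ.image (io σ')) \ (Finset.univ.image (io σ))
      = (Finset.univ.filter
          (fun s : SeqS n => ¬ ∀ j, σ (s.2 j) = σ' (s.2 j))).image (io σ') := by
    ext q
    simp only [Finset.mem_sdiff, Finset.mem_image, Finset.mem_univ, true_and,
      Finset.mem_filter]
    constructor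
    · rintro ⟨⟨s, rfl⟩, hns⟩
      refine ⟨s, fun hall => hns ⟨s, ?_⟩, rfl⟩
      simp only [hio]
      congr 1
      funext j
      exact hall j
    · rintro ⟨s, hns, rfl⟩
      refine ⟨⟨s, rfl⟩, ?_⟩
      rintro ⟨t, ht⟩
      have hts : t = s := congrArg Sigma.fst ht
      subst hts
      apply hns
      intro j
      have := (Sigma.mk.inj_iff.mp ht).2
      have heq : (fun j => σ (t.2 j)) = (fun j => σ' (t.2 j)) := eq_of_heq this
      exact congrFun heq j
  rw [hsplit, Finset.prod_union Finset.disjoint_sdiff, hdiff,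
    Finset.prod_image (fun a _ b _ h => hioinj σ h),
    Finset.prod_image (fun a _ b _ h => hioinj σ' h)]

/-! ### Claim C : Chebyshev bound for fixed N -/

lemma claimC {Ω : Type*} [MeasurableSpace Ω] (P : Measure Ω) [IsProbabilityMeasure P]
    {n : ℕ} (hn : 1 ≤ n) (k : Fin n → ℕ → ℕ)
    (lam : SeqS n → ℕ → Measure ℝ) (hlam : ∀ s N, IsProbabilityMeasure (lam s N))
    (ξ : (N : ℕ) → (s : SeqS n) →
      ((j : Fin (s.1.1 + 1)) → Fin (k (s.2 j) N) → Bool) → Ω → ℝ)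
    (hmeas : ∀ N s c, Measurable (ξ N s c))
    (Δ : SeqS n → Set ℝ) (hΔm : ∀ s, MeasurableSet (Δ s))
    (nab : Fin n → Set ℝ)
    (N : ℕ) (hkN : ∑ j : Fin n, k j N = N)
    (hindep : iIndepFun
      (fun q : Σ s : SeqS n, ((j : Fin (s.1.1 + 1)) → Fin (k (s.2 j) N) → Bool) =>
        ξ N q.1 q.2) P)
    (hdist : ∀ s c, P.map (ξ N s c) = lam s N)
    (hpos : ∀ A : Finset (Fin n), A.Nonempty →
      0 < secQ lam Δ A N * secAlpha k nab A N)
    (ε : ℝ) (hε : 0 < ε) :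
    P {ω | (ε * (secQ lam Δ Finset.univ N * secAlpha k nab Finset.univ N))^2
        ≤ (secX ξ Δ nab N ω - secQ lam Δ Finset.univ N * secAlpha k nab Finset.univ N)^2}
      ≤ ENNReal.ofReal ((ε^2)⁻¹ *
        ∑ B ∈ Finset.univ.filter (fun B : Finset (Fin n) => B.Nonempty),
          ((2:ℝ)^secK k B N * secQ lam Δ B N * secAlpha k nab B N)⁻¹) := by
  classical
  set Qu := secQ lam Δ Finset.univ N with hQu
  set m := Qu * secAlpha k nab Finset.univ N with hm
  set X := secX ξ Δ nab N with hX
  set c := secC k nab N with hc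
  set Ev := secEv ξ Δ N with hEvdef
  set T : Fin n → ℝ := secT k nab N with hT
  set D : Finset (Fin n) → ℝ := fun B =>
    ∏ s ∈ Finset.univ.filter (fun s : SeqS n => ¬ ∀ j, s.2 j ∈ B), (lam s N (Δ s)).toReal
    with hD
  set RN := ∑ B ∈ Finset.univ.filter (fun B : Finset (Fin n) => B.Nonempty),
      ((2:ℝ)^secK k B N * secQ lam Δ B N * secAlpha k nab B N)⁻¹ with hRN
  have hEvm : ∀ σ, MeasurableSet (Ev σ) := fun σ =>
    MeasurableSet.iInter (fun s => (hmeas N s _) (hΔm s))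
  -- D is nonnegative, c is nonnegative
  have hDnn : ∀ B, 0 ≤ D B := fun B =>
    Finset.prod_nonneg fun s _ => ENNReal.toReal_nonneg
  have hQnn : ∀ A, (0:ℝ) ≤ secQ lam Δ A N := fun A => secQ_nonneg lam Δ A N
  -- f0 : joint probabilities
  have f0 : ∀ σ σ', (P (Ev σ ∩ Ev σ')).toReal
      = Qu * D (Finset.univ.filter fun i => σ i = σ' i) := by
    intro σ σ'
    rw [hEvdef, claimB P lam ξ hmeas Δ hΔm N hindep hdist σ σ']
    rw [ENNReal.toReal_mul, ENNReal.toReal_prod, ENNReal.toReal_prod]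
    congr 1
    · rw [hQu]; unfold secQ
      rw [Finset.filter_true_of_mem (fun s _ => fun j => Finset.mem_univ _)]
    · rw [hD]
      apply Finset.prod_congr _ (fun _ _ => rfl)
      apply Finset.filter_congr
      intro s _
      simp
  -- f1 : single probabilities
  have f1 : ∀ σ, (P (Ev σ)).toReal = Qu := by
    intro σ
    have := f0 σ σ
    rw [Set.inter_self] at this
    rw [this]
    have hfil : (Finset.univ.filter fun i : Fin n => σ i = σ i) = Finset.univ := by
      simp
    rw [hfil]
    have : (Finset.univ.filter (fun s : SeqS n => ¬ ∀ j, s.2 j ∈ (Finset.univ : Finset (Fin n))))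
        = ∅ := by
      apply Finset.filter_false_of_mem
      intro s _ h
      exact h fun j => Finset.mem_univ _
    simp only [hD]
    rw [this, Finset.prod_empty, mul_one]
  -- relation between D and secQ
  have fDQ : ∀ B, secQ lam Δ B N * D B = Qu := by
    intro B
    rw [hD, hQu]
    unfold secQ
    rw [Finset.filter_true_of_mem (fun s _ => fun j => Finset.mem_univ _)]
    exact Finset.prod_filter_mul_prod_filter_not Finset.univ _ _
  -- alpha in terms of T
  have falpha : ∀ A, secAlpha k nab A N = ((2:ℝ)^secK k A N)⁻¹ * ∏ i ∈ A, T i :=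
    fun A => secAlpha_eq k nab A N
  have hKuniv : secK k Finset.univ N = N := by rw [secK, hkN]
  have halphau : secAlpha k nab Finset.univ N = ((2:ℝ)^N)⁻¹ * ∏ i, T i := by
    rw [falpha, hKuniv]
  -- positivity
  have hTnn : ∀ i, 0 ≤ T i := fun i => secT_nonneg i
  have hQTpos : ∀ B : Finset (Fin n),
      0 < secQ lam Δ B N ∧ 0 < ∏ i ∈ B, T i := by
    intro B
    rcases B.eq_empty_or_nonempty with rfl | hBne
    · rw [secQ_empty, Finset.prod_empty]
      exact ⟨one_pos, one_pos⟩
    · have h := hpos B hBne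
      rw [falpha B] at h
      have hq : 0 ≤ secQ lam Δ B N := hQnn B
      have ha : 0 ≤ ((2:ℝ)^secK k B N)⁻¹ * ∏ i ∈ B, T i :=
        mul_nonneg (by positivity) (Finset.prod_nonneg fun i _ => hTnn i)
      rcases mul_pos_iff.mp h with ⟨h1, h2⟩ | ⟨h1, h2⟩
      · constructor
        · exact h1
        · rcases mul_pos_iff.mp h2 with ⟨_, h4⟩ | ⟨h3, _⟩
          · exact h4
          · exact absurd h3 (not_lt.mpr (by positivity))
      · exact absurd h1 (not_lt.mpr hq)
    
  have hQupos : 0 < Qu := by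
    rw [hQu]
    exact (by simpa using (hQTpos Finset.univ).1)
  have hPTpos : 0 < ∏ i, T i := by simpa using (hQTpos Finset.univ).2
  have hmpos : 0 < m := by
    rw [hm, halphau]
    positivity
  -- integrability
  have hind_int : ∀ (s : Set Ω), MeasurableSet s →
      Integrable (s.indicator (1 : Ω → ℝ)) P := fun s hs =>
    (integrable_const (1:ℝ)).indicator hs
  have hXint : Integrable X P := by
    rw [hX]; unfold secX
    apply Integrable.const_mul
    apply integrable_finset_sum
    intro σ _
    exact (hind_int _ (hEvm σ)).const_mul _
  -- first moment
  have hsumc : ∑ σ : ∀ i : Fin n, Fin (k i N) → Bool, c σ = ∏ i, T i := by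
    rw [hc]
    unfold secC
    rw [sum_pi_prod (fun i (a : Fin (k i N) → Bool) => secChi k nab N i a)]
    rfl
  have hEX : ∫ ω, X ω ∂P = m := by
    rw [hX]; unfold secX
    rw [integral_const_mul]
    rw [integral_finset_sum _ (fun σ _ => (hind_int _ (hEvm σ)).const_mul _)]
    have : ∀ σ : ∀ i : Fin n, Fin (k i N) → Bool,
        ∫ ω, secC k nab N σ * (secEv ξ Δ N σ).indicator 1 ω ∂P = c σ * Qu := by
      intro σ
      rw [integral_const_mul, integral_indicator_one (hEvm σ), measureReal_def, f1 σ]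
    rw [Finset.sum_congr rfl (fun σ _ => this σ), ← Finset.sum_mul, hsumc]
    rw [hm, halphau]
    ring
  -- pointwise square expansion
  have hXsq : ∀ ω, X ω ^ 2 = ((2:ℝ)^N)⁻¹^2 *
      ∑ σ : ∀ i : Fin n, Fin (k i N) → Bool, ∑ σ' : ∀ i : Fin n, Fin (k i N) → Bool,
        (c σ * c σ') * ((Ev σ ∩ Ev σ').indicator (1 : Ω → ℝ) ω) := by
    intro ω
    rw [hX]; unfold secX
    rw [mul_pow]
    congr 1
    rw [sq, Finset.sum_mul_sum]
    refine Finset.sum_congr rfl fun σ _ => Finset.sum_congr rfl fun σ' _ => ?_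
    have h : (Ev σ ∩ Ev σ').indicator (1 : Ω → ℝ) ω
        = (Ev σ).indicator 1 ω * (Ev σ').indicator 1 ω := by
      rw [Set.inter_indicator_one]; rfl
    rw [h, hEvdef, hc]
    ring
  -- integrability of the square
  have hX2int : Integrable (fun ω => X ω ^ 2) P := by
    rw [show (fun ω => X ω ^ 2) = fun ω => ((2:ℝ)^N)⁻¹^2 *
      ∑ σ : ∀ i : Fin n, Fin (k i N) → Bool, ∑ σ' : ∀ i : Fin n, Fin (k i N) → Bool,
        (c σ * c σ') * ((Ev σ ∩ Ev σ').indicator (1 : Ω → ℝ) ω) from funext hXsq]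
    apply Integrable.const_mul
    apply integrable_finset_sum
    intro σ _
    apply integrable_finset_sum
    intro σ' _
    exact (hind_int _ ((hEvm σ).inter (hEvm σ'))).const_mul _
  -- second moment
  have hEX2 : ∫ ω, X ω ^ 2 ∂P = ((2:ℝ)^N)⁻¹^2 *
      ∑ σ : ∀ i : Fin n, Fin (k i N) → Bool, ∑ σ' : ∀ i : Fin n, Fin (k i N) → Bool,
        (c σ * c σ') * (Qu * D (Finset.univ.filter fun i => σ i = σ' i)) := by
    rw [show (fun ω => X ω ^ 2) = fun ω => ((2:ℝ)^N)⁻¹^2 *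
      ∑ σ : ∀ i : Fin n, Fin (k i N) → Bool, ∑ σ' : ∀ i : Fin n, Fin (k i N) → Bool,
        (c σ * c σ') * ((Ev σ ∩ Ev σ').indicator (1 : Ω → ℝ) ω) from funext hXsq]
    rw [integral_const_mul]
    congr 1
    rw [integral_finset_sum _ (fun σ _ => integrable_finset_sum _
      (fun σ' _ => (hind_int _ ((hEvm σ).inter (hEvm σ'))).const_mul _))]
    refine Finset.sum_congr rfl fun σ _ => ?_
    rw [integral_finset_sum _ (fun σ' _ => (hind_int _ ((hEvm σ).inter (hEvm σ'))).const_mul _)]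
    refine Finset.sum_congr rfl fun σ' _ => ?_
    rw [integral_const_mul, integral_indicator_one ((hEvm σ).inter (hEvm σ')), measureReal_def, f0 σ σ']
  -- the combinatorial bound
  have hcomb : (∑ σ : ∀ i : Fin n, Fin (k i N) → Bool, ∑ σ' : ∀ i : Fin n, Fin (k i N) → Bool,
        (c σ * c σ') * (Qu * D (Finset.univ.filter fun i => σ i = σ' i)))
      ≤ ∑ B : Finset (Fin n), Qu * D B * ((∏ i, T i) * ∏ i ∈ Bᶜ, T i) := by
    have step1 : ∀ (σ σ' : ∀ i : Fin n, Fin (k i N) → Bool),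
        (c σ * c σ') * (Qu * D (Finset.univ.filter fun i => σ i = σ' i))
        ≤ ∑ B : Finset (Fin n),
          (if (∀ i ∈ B, σ i = σ' i) then (c σ * c σ') * (Qu * D B) else 0) := by
      intro σ σ'
      have heq : (c σ * c σ') * (Qu * D (Finset.univ.filter fun i => σ i = σ' i))
          = ∑ B : Finset (Fin n),
            (if B = (Finset.univ.filter fun i => σ i = σ' i)
              then (c σ * c σ') * (Qu * D B) else 0) := by
        rw [Finset.sum_ite_eq' Finset.univ
          ((Finset.univ.filter fun i => σ i = σ' i))
          (fun B => (c σ * c σ') * (Qu * D B))]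
        simp
      rw [heq]
      apply Finset.sum_le_sum
      intro B _
      by_cases hB : B = (Finset.univ.filter fun i => σ i = σ' i)
      · rw [if_pos hB, if_pos]
        intro i hi
        rw [hB] at hi
        exact (Finset.mem_filter.mp hi).2
      · rw [if_neg hB]
        split_ifs
        · have hcc : 0 ≤ c σ * c σ' := mul_nonneg (secC_nonneg σ) (secC_nonneg σ')
          exact mul_nonneg hcc (mul_nonneg hQupos.le (hDnn B))
        · exact le_rfl
    calc (∑ σ : ∀ i : Fin n, Fin (k i N) → Bool, ∑ σ' : ∀ i : Fin n, Fin (k i N) → Bool,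
        (c σ * c σ') * (Qu * D (Finset.univ.filter fun i => σ i = σ' i)))
        ≤ ∑ σ : ∀ i : Fin n, Fin (k i N) → Bool, ∑ σ' : ∀ i : Fin n, Fin (k i N) → Bool,
          ∑ B : Finset (Fin n),
            (if (∀ i ∈ B, σ i = σ' i) then (c σ * c σ') * (Qu * D B) else 0) := by
          exact Finset.sum_le_sum fun σ _ => Finset.sum_le_sum fun σ' _ => step1 σ σ'
      _ = ∑ B : Finset (Fin n), ∑ σ : ∀ i : Fin n, Fin (k i N) → Bool,
            ∑ σ' : ∀ i : Fin n, Fin (k i N) → Bool,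
            (if (∀ i ∈ B, σ i = σ' i) then (c σ * c σ') * (Qu * D B) else 0) := by
          rw [Finset.sum_congr rfl fun σ (_ : σ ∈ Finset.univ) =>
            (Finset.sum_comm (s := Finset.univ) (t := Finset.univ)
              (f := fun (σ' : ∀ i : Fin n, Fin (k i N) → Bool) (B : Finset (Fin n)) =>
                if (∀ i ∈ B, σ i = σ' i) then (c σ * c σ') * (Qu * D B) else 0))]
          exact Finset.sum_comm
      _ = ∑ B : Finset (Fin n), Qu * D B * ((∏ i, T i) * ∏ i ∈ Bᶜ, T i) := by
          refine Finset.sum_congr rfl fun B _ => ?_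
          have hpull : ∀ (σ σ' : ∀ i : Fin n, Fin (k i N) → Bool),
              (if (∀ i ∈ B, σ i = σ' i) then (c σ * c σ') * (Qu * D B) else 0)
              = (if (∀ i ∈ B, σ i = σ' i) then (∏ i, secChi k nab N i (σ i)) *
                  (∏ i, secChi k nab N i (σ' i)) else 0) * (Qu * D B) := by
            intro σ σ'
            split_ifs
            · rw [hc]; rfl
            · rw [zero_mul]
          simp only [hpull, ← Finset.sum_mul]
          rw [agree_sum (fun i a => secChi k nab N i a) (fun i a => secChi_idem i a) B]
          have hTs : ∀ i, (∑ a : Fin (k i N) → Bool, secChi k nab N i a) = T i := fun i => rfl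
          simp only [hTs]
          ring
  -- per-B identity
  have f8 : ∀ B : Finset (Fin n),
      ((2:ℝ)^N)⁻¹^2 * (Qu * D B * ((∏ i, T i) * ∏ i ∈ Bᶜ, T i))
      = m^2 * ((2:ℝ)^secK k B N * secQ lam Δ B N * secAlpha k nab B N)⁻¹ := by
    intro B
    have hQB := (hQTpos B).1
    have hTB := (hQTpos B).2
    have h2k : (0:ℝ) < (2:ℝ)^secK k B N := by positivity
    have h2N : (0:ℝ) < (2:ℝ)^N := by positivity
    rw [hm, halphau, falpha B]
    rw [← fDQ B, ← Finset.prod_mul_prod_compl B T]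
    field_simp
  -- sum over all B
  have hsplitB : (∑ B : Finset (Fin n),
      m^2 * ((2:ℝ)^secK k B N * secQ lam Δ B N * secAlpha k nab B N)⁻¹)
      = m^2 * RN + m^2 := by
    rw [← Finset.sum_filter_add_sum_filter_not Finset.univ
      (fun B : Finset (Fin n) => B.Nonempty)]
    congr 1
    · rw [hRN, Finset.mul_sum]
    · have hone : (Finset.univ.filter (fun B : Finset (Fin n) => ¬ B.Nonempty))
          = {(∅ : Finset (Fin n))} := by
        ext B
        simp [Finset.not_nonempty_iff_eq_empty]
      rw [hone, Finset.sum_singleton, secQ_empty, secAlpha_empty]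
      simp [secK]
  -- second moment bound
  have hEX2le : ∫ ω, X ω ^ 2 ∂P ≤ m^2 * RN + m^2 := by
    rw [hEX2]
    have h1 := mul_le_mul_of_nonneg_left hcomb
      (show (0:ℝ) ≤ ((2:ℝ)^N)⁻¹^2 by positivity)
    refine h1.trans (le_of_eq ?_)
    rw [Finset.mul_sum, Finset.sum_congr rfl (fun B _ => f8 B), hsplitB]
  -- variance
  have hexp : (fun ω => (X ω - m)^2) = fun ω => X ω^2 - (2*m) * X ω + m^2 := by
    funext ω; ring
  have ha : Integrable (fun ω => X ω^2 - (2*m) * X ω) P :=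
    hX2int.sub (hXint.const_mul (2*m))
  have hintsq : Integrable (fun ω => (X ω - m)^2) P := by
    rw [hexp]
    exact ha.add (integrable_const _)
  have hvar : ∫ ω, (X ω - m)^2 ∂P = (∫ ω, X ω^2 ∂P) - m^2 := by
    rw [hexp, integral_add ha (integrable_const _),
      integral_sub hX2int (hXint.const_mul (2*m)), integral_const_mul, hEX, integral_const]
    simp only [probReal_univ, smul_eq_mul, one_mul]
    ring
  -- Markov / Chebyshev
  have hmarkov := mul_meas_ge_le_integral_of_nonneg
    (ae_of_all P fun ω => sq_nonneg (X ω - m)) hintsq ((ε*m)^2)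
  have hRNnn : 0 ≤ RN := by
    rw [hRN]
    apply Finset.sum_nonneg
    intro B hB
    exact inv_nonneg.mpr (mul_nonneg (mul_nonneg (by positivity) (hQnn B))
      (secAlpha_nonneg k nab B N))
  have hfinal : (P {ω | (ε*m)^2 ≤ (X ω - m)^2}).toReal ≤ (ε^2)⁻¹ * RN := by
    have h1 : ∫ ω, (X ω - m)^2 ∂P ≤ m^2 * RN := by
      rw [hvar]; linarith [hEX2le]
    have h2 : (ε * m) ^ 2 * (P {ω | (ε*m)^2 ≤ (X ω - m)^2}).toReal ≤ m^2 * RN := hmarkov.trans h1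
    have hm2 : (0:ℝ) < m^2 := by positivity
    have h5 : (ε^2 * (P {ω | (ε*m)^2 ≤ (X ω - m)^2}).toReal) * m^2 ≤ RN * m^2 := by
      nlinarith [h2]
    have h6 := le_of_mul_le_mul_right h5 hm2
    rw [inv_mul_eq_div, le_div_iff₀ (show (0:ℝ) < ε^2 by positivity)]
    linarith [h6]
  calc P {ω | (ε*m)^2 ≤ (X ω - m)^2}
      = ENNReal.ofReal ((P {ω | (ε*m)^2 ≤ (X ω - m)^2}).toReal) :=
        (ENNReal.ofReal_toReal (measure_ne_top P _)).symm
    _ ≤ ENNReal.ofReal ((ε^2)⁻¹ * RN) := ENNReal.ofReal_le_ofReal hfinal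

/-- **Section 5, Step 2.** If `∑_N 1/(2^{k(A,N)} Q_{A,N} α_{A,N}) < ∞` for every
nonempty `A ⊆ I`, then for every `ε > 0`, almost surely, eventually in `N`,
`(1-ε) Q_{I,N} α_{I,N} ≤ μ_N(□) ≤ (1+ε) Q_{I,N} α_{I,N}`. -/
theorem sec5_step2
{Ω : Type*} [MeasurableSpace Ω] (P : Measure Ω) [IsProbabilityMeasure P]
    (n : ℕ) (hn : 1 ≤ n)
    (k : Fin n → ℕ → ℕ) (hk : ∀ N : ℕ, ∑ j : Fin n, k j N = N)
    (lam : SeqS n → ℕ → Measure ℝ) (hlam : ∀ s N, IsProbabilityMeasure (lam s N))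
    (ξ : (N : ℕ) → (s : SeqS n) →
      ((j : Fin (s.1.1 + 1)) → Fin (k (s.2 j) N) → Bool) → Ω → ℝ)
    (hmeas : ∀ N s c, Measurable (ξ N s c))
    (hindep : ∀ N : ℕ, iIndepFun
      (fun q : Σ s : SeqS n, ((j : Fin (s.1.1 + 1)) → Fin (k (s.2 j) N) → Bool) =>
        ξ N q.1 q.2) P)
    (hdist : ∀ N s c, P.map (ξ N s c) = lam s N)
    (Δ : SeqS n → Set ℝ) (hΔ : ∀ s, (Δ s).OrdConnected) (hΔm : ∀ s, MeasurableSet (Δ s))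
    (nab : Fin n → Set ℝ) (hnab : ∀ i, (nab i).OrdConnected)
    (hnabm : ∀ i, MeasurableSet (nab i))
    (hpos : ∀ A : Finset (Fin n), A.Nonempty → ∀ N : ℕ,
      0 < secQ lam Δ A N * secAlpha k nab A N)
    (hsum : ∀ A : Finset (Fin n), A.Nonempty → Summable fun N : ℕ =>
      ((2 : ℝ) ^ secK k A N * secQ lam Δ A N * secAlpha k nab A N)⁻¹)
    (ε : ℝ) (hε : 0 < ε) :
    ∀ᵐ ω ∂P, ∀ᶠ N in atTop,
      (1 - ε) * (secQ lam Δ Finset.univ N * secAlpha k nab Finset.univ N) ≤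
        ((empMeasure
        (fun σ : (∀ i : Fin n, Fin (k i N) → Bool) =>
          ((fun s : SeqS n => ξ N s (fun j => σ (s.2 j)) ω),
           (fun i : Fin n => (∑ t : Fin (k i N), if σ i t then (1 : ℝ) else -1) / N))))
          ((Set.univ.pi Δ) ×ˢ (Set.univ.pi nab))).toReal ∧
      ((empMeasure
        (fun σ : (∀ i : Fin n, Fin (k i N) → Bool) =>
          ((fun s : SeqS n => ξ N s (fun j => σ (s.2 j)) ω),
           (fun i : Fin n => (∑ t : Fin (k i N), if σ i t then (1 : ℝ) else -1) / N))))
          ((Set.univ.pi Δ) ×ˢ (Set.univ.pi nab))).toReal ≤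
        (1 + ε) * (secQ lam Δ Finset.univ N * secAlpha k nab Finset.univ N) := by
  classical
  have hFinNonempty : Nonempty (Fin n) := ⟨⟨0, hn⟩⟩
  set RN : ℕ → ℝ := fun N =>
    ∑ B ∈ Finset.univ.filter (fun B : Finset (Fin n) => B.Nonempty),
      ((2:ℝ)^secK k B N * secQ lam Δ B N * secAlpha k nab B N)⁻¹ with hRNdef
  have hRsum : Summable (fun N => (ε^2)⁻¹ * RN N) := by
    apply Summable.mul_left
    exact summable_sum (fun B hB => hsum B (Finset.mem_filter.mp hB).2)
  set bad : ℕ → Set Ω := fun N => {ω |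
    ¬ ((1 - ε) * (secQ lam Δ Finset.univ N * secAlpha k nab Finset.univ N) ≤
        ((empMeasure
        (fun σ : (∀ i : Fin n, Fin (k i N) → Bool) =>
          ((fun s : SeqS n => ξ N s (fun j => σ (s.2 j)) ω),
           (fun i : Fin n => (∑ t : Fin (k i N), if σ i t then (1 : ℝ) else -1) / N))))
          ((Set.univ.pi Δ) ×ˢ (Set.univ.pi nab))).toReal ∧
      ((empMeasure
        (fun σ : (∀ i : Fin n, Fin (k i N) → Bool) =>
          ((fun s : SeqS n => ξ N s (fun j => σ (s.2 j)) ω),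
           (fun i : Fin n => (∑ t : Fin (k i N), if σ i t then (1 : ℝ) else -1) / N))))
          ((Set.univ.pi Δ) ×ˢ (Set.univ.pi nab))).toReal ≤
        (1 + ε) * (secQ lam Δ Finset.univ N * secAlpha k nab Finset.univ N))} with hbad
  have key : ∀ N : ℕ, P (bad N) ≤ ENNReal.ofReal ((ε^2)⁻¹ * RN N) := by
    intro N
    have hC := claimC P hn k lam hlam ξ hmeas Δ hΔm nab N (hk N) (hindep N) (hdist N)
      (fun A hA => hpos A hA N) ε hε
    refine le_trans (measure_mono ?_) hC
    intro ω hω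
    simp only [hbad, Set.mem_setOf_eq] at hω
    rw [claimA ξ Δ hΔm nab hnabm N (hk N) ω] at hω
    simp only [Set.mem_setOf_eq]
    have hmpos : 0 < secQ lam Δ Finset.univ N * secAlpha k nab Finset.univ N :=
      hpos Finset.univ Finset.univ_nonempty N
    set v := secX ξ Δ nab N ω with hv
    set m := secQ lam Δ Finset.univ N * secAlpha k nab Finset.univ N with hmdef
    rcases not_and_or.mp hω with h | h
    · have h' : v < (1 - ε) * m := lt_of_not_ge h
      have h2 : 0 < ε*m := mul_pos hε hmpos
      have h1 : ε*m < m - v := by nlinarith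
      nlinarith [mul_pos (show (0:ℝ) < m - v - ε*m by linarith)
        (show (0:ℝ) < m - v + ε*m by linarith)]
    · have h' : (1 + ε) * m < v := lt_of_not_ge h
      have h2 : 0 < ε*m := mul_pos hε hmpos
      have h1 : ε*m < v - m := by nlinarith
      nlinarith [mul_pos (show (0:ℝ) < v - m - ε*m by linarith)
        (show (0:ℝ) < v - m + ε*m by linarith)]
  have htsum : (∑' N, P (bad N)) ≠ ∞ := by
    have hnn : ∀ N, 0 ≤ (ε^2)⁻¹ * RN N := by
      intro N
      apply mul_nonneg (by positivity)
      apply Finset.sum_nonneg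
      intro B _
      exact inv_nonneg.mpr (mul_nonneg (mul_nonneg (by positivity)
        (secQ_nonneg lam Δ B N)) (secAlpha_nonneg k nab B N))
    have hle : (∑' N, P (bad N)) ≤ ENNReal.ofReal (∑' N, (ε^2)⁻¹ * RN N) := by
      rw [ENNReal.ofReal_tsum_of_nonneg hnn hRsum]
      exact ENNReal.tsum_le_tsum key
    exact ne_of_lt (lt_of_le_of_lt hle ENNReal.ofReal_lt_top)
  filter_upwards [MeasureTheory.ae_eventually_notMem htsum] with ω hω
  filter_upwards [hω] with N hN
  have : ω ∉ bad N := hN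
  simpa only [hbad, Set.mem_setOf_eq, not_not] using this
end
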